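/- arXiv:2508.17785 — 4 statements merged into one kernel-verified Lean document; each statement's English description precedes it below -/
import Mathlib

section
/- For a graph G without isolated vertices, B(G) = 2 if and only if G has a pair of twins, i.e., two distinct vertices x, y with N(x) = N(y) or N[x] = N[y]. -/
open Set

/-- One step of the zero forcing process on the set `W` of white vertices:
a white vertex is removed (colored black) if it is the unique white neighbor
of some black vertex. -/
def zbStep {V : Type*} (G : SimpleGraph V) (W : Set V) : Set V :=
  {w ∈ W | ¬ ∃ b ∉ W, G.Adj b w ∧ ∀ w' ∈ W, G.Adj b w' → w' = w}

/-- `W` is a zero blocking set: the zero forcing process started with white set `W`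
never colors all of `W` black. -/
def IsZeroBlocking {V : Type*} (G : SimpleGraph V) (W : Set V) : Prop :=
  ∀ n : ℕ, ((zbStep G)^[n] W).Nonempty

/-- The zero blocking number `B(G)`. -/
noncomputable def zbNum {V : Type*} (G : SimpleGraph V) : ℕ∞ :=
  ⨅ (W : Set V) (_ : IsZeroBlocking G W), W.encard

section Aux

variable {V : Type*} (G : SimpleGraph V)

lemma zbStep_subset (W : Set V) : zbStep G W ⊆ W := fun w hw => hw.1

lemma not_blocking_empty : ¬ IsZeroBlocking G (∅ : Set V) := by
  intro hb
  simpa using hb 0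

lemma not_blocking_singleton (h : ∀ v : V, ∃ u, G.Adj v u) (x : V) :
    ¬ IsZeroBlocking G {x} := by
  intro hb
  obtain ⟨u, hu⟩ := h x
  have hx : zbStep G {x} = ∅ := by
    apply eq_empty_iff_forall_notMem.mpr
    intro w hw
    have hwx : w = x := hw.1
    subst hwx
    exact hw.2 ⟨u, fun hu' => G.irrefl ((mem_singleton_iff.mp hu') ▸ hu),
      hu.symm, fun w' hw' _ => hw'⟩
  have h1 := hb 1
  rw [Function.iterate_one, hx] at h1
  simpa using h1

lemma zbStep_pair_fix_iff {x y : V} (hxy : x ≠ y) :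
    zbStep G {x, y} = {x, y} ↔
      ∀ b, b ∉ ({x, y} : Set V) → (G.Adj b x ↔ G.Adj b y) := by
  constructor
  · intro hfix b hb
    constructor
    · intro hbx
      by_contra hby
      have hxmem : x ∉ zbStep G {x, y} := by
        intro hx
        exact hx.2 ⟨b, hb, hbx, fun w' hw' hadj => by
          rcases hw' with h' | h'
          · exact h'
          · exact absurd (h' ▸ hadj) hby⟩
      rw [hfix] at hxmem
      exact hxmem (mem_insert x _)
    · intro hby
      by_contra hbx
      have hymem : y ∉ zbStep G {x, y} := by
        intro hy
        exact hy.2 ⟨b, hb, hby, fun w' hw' hadj => by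
          rcases hw' with h' | h'
          · exact absurd (h' ▸ hadj) hbx
          · exact h'⟩
      rw [hfix] at hymem
      exact hymem (mem_insert_of_mem _ rfl)
  · intro hcond
    apply Subset.antisymm (zbStep_subset G _)
    intro w hw
    rcases hw with hw | hw
    · subst hw
      refine ⟨mem_insert _ _, ?_⟩
      rintro ⟨b, hb, hbx, huniq⟩
      have hby : G.Adj b y := (hcond b hb).mp hbx
      exact hxy (huniq y (mem_insert_of_mem _ rfl) hby).symm
    · rw [mem_singleton_iff] at hw
      subst hw
      refine ⟨mem_insert_of_mem _ rfl, ?_⟩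
      rintro ⟨b, hb, hby, huniq⟩
      have hbx : G.Adj b x := (hcond b hb).mpr hby
      exact hxy (huniq x (mem_insert _ _) hbx)

lemma twins_iff {x y : V} (hxy : x ≠ y) :
    (G.neighborSet x = G.neighborSet y ∨
      insert x (G.neighborSet x) = insert y (G.neighborSet y)) ↔
    ∀ b, b ∉ ({x, y} : Set V) → (G.Adj b x ↔ G.Adj b y) := by
  constructor
  · rintro (htw | htw) b hb
    · constructor
      · intro hbx
        have : b ∈ G.neighborSet x := hbx.symm
        rw [htw] at this
        exact this.symm
      · intro hby
        have : b ∈ G.neighborSet y := hby.symm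
        rw [← htw] at this
        exact this.symm
    · have hbx : b ≠ x := fun h' => hb (h' ▸ mem_insert _ _)
      have hby : b ≠ y := fun h' => hb (h' ▸ mem_insert_of_mem _ rfl)
      constructor
      · intro hadj
        have : b ∈ insert x (G.neighborSet x) := mem_insert_of_mem _ hadj.symm
        rw [htw] at this
        rcases this with h' | h'
        · exact absurd h' hby
        · exact SimpleGraph.Adj.symm h'
      · intro hadj
        have : b ∈ insert y (G.neighborSet y) := mem_insert_of_mem _ hadj.symm
        rw [← htw] at this
        rcases this with h' | h'
        · exact absurd h' hbx
        · exact SimpleGraph.Adj.symm h'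
  · intro hcond
    by_cases hadj : G.Adj x y
    · right
      ext z
      simp only [mem_insert_iff, SimpleGraph.mem_neighborSet]
      rcases eq_or_ne z x with rfl | hzx
      · simp [hadj.symm]
      rcases eq_or_ne z y with rfl | hzy
      · simp [hadj]
      · simp only [hzx, hzy, false_or]
        rw [G.adj_comm x z, G.adj_comm y z]
        exact hcond z (by simp [hzx, hzy])
    · left
      ext z
      simp only [SimpleGraph.mem_neighborSet]
      rcases eq_or_ne z x with rfl | hzx
      · constructor
        · intro h'; exact absurd h' (G.irrefl)
        · intro h'; exact absurd h'.symm hadj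
      rcases eq_or_ne z y with rfl | hzy
      · constructor
        · intro h'; exact absurd h' hadj
        · intro h'; exact absurd h' (G.irrefl)
      · rw [G.adj_comm x z, G.adj_comm y z]
        exact hcond z (by simp [hzx, hzy])

lemma blocking_pair_iff (h : ∀ v : V, ∃ u, G.Adj v u) {x y : V} (hxy : x ≠ y) :
    IsZeroBlocking G {x, y} ↔ zbStep G {x, y} = {x, y} := by
  constructor
  · intro hb
    by_contra hne
    set S := zbStep G {x, y} with hS
    have hSb : IsZeroBlocking G S := by
      intro n
      have := hb (n + 1)
      rwa [Function.iterate_succ_apply] at this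
    have hSsub : S ⊆ {x, y} := zbStep_subset G _
    obtain ⟨z, hz⟩ := by simpa using hSb 0
    have hSz : S = {z} := by
      apply Subset.antisymm
      · intro z' hz'
        rw [mem_singleton_iff]
        by_contra hzz
        apply hne
        apply Subset.antisymm hSsub
        have hzmem := hSsub hz
        have hz'mem := hSsub hz'
        rcases hzmem with h1 | h1 <;> rcases hz'mem with h2 | h2
        all_goals try simp only [mem_singleton_iff] at *
        · exact absurd (h2.trans h1.symm) hzz
        · subst h1; subst h2
          intro w hw
          rcases hw with hw | hw
          · exact hw ▸ hz
          · exact (mem_singleton_iff.mp hw) ▸ hz'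
        · subst h1; subst h2
          intro w hw
          rcases hw with hw | hw
          · exact hw ▸ hz'
          · exact (mem_singleton_iff.mp hw) ▸ hz
        · exact absurd (h2.trans h1.symm) hzz
      · intro w hw
        exact (mem_singleton_iff.mp hw) ▸ hz
    rw [hSz] at hSb
    exact not_blocking_singleton G h z hSb
  · intro hfix n
    rw [Function.iterate_fixed hfix]
    exact ⟨x, mem_insert _ _⟩

lemma two_le_encard_of_blocking (h : ∀ v : V, ∃ u, G.Adj v u) {W : Set V}
    (hW : IsZeroBlocking G W) : 2 ≤ W.encard := by
  rw [show (2 : ℕ∞) = 1 + 1 from rfl, ENat.add_one_le_iff (by simp),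
    Set.one_lt_encard_iff]
  rcases Set.eq_empty_or_nonempty W with hE | ⟨a, ha⟩
  · exact absurd (hE ▸ hW) (not_blocking_empty G)
  · by_contra hns
    push_neg at hns
    have hWa : W = {a} := Subset.antisymm
      (fun b hb => mem_singleton_iff.mpr (hns b a hb ha))
      (fun b hb => (mem_singleton_iff.mp hb) ▸ ha)
    exact not_blocking_singleton G h a (hWa ▸ hW)

end Aux

theorem zbNum_eq_two_iff_twins {V : Type*} [Fintype V] (G : SimpleGraph V)
    (h : ∀ v : V, ∃ u, G.Adj v u) :
    zbNum G = 2 ↔ ∃ x y : V, x ≠ y ∧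
      (G.neighborSet x = G.neighborSet y ∨
        insert x (G.neighborSet x) = insert y (G.neighborSet y)) := by
  constructor
  · intro h2
    have hlt : zbNum G < 3 := by rw [h2]; norm_num
    rw [zbNum, iInf_lt_iff] at hlt
    obtain ⟨W, hW⟩ := hlt
    rw [iInf_lt_iff] at hW
    obtain ⟨hWb, hWc⟩ := hW
    have hle : W.encard ≤ 2 := by
      rw [show (3 : ℕ∞) = 2 + 1 from rfl, ENat.lt_add_one_iff (by simp)] at hWc
      exact hWc
    have heq : W.encard = 2 := le_antisymm hle (two_le_encard_of_blocking G h hWb)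
    obtain ⟨x, y, hxy, hWxy⟩ := Set.encard_eq_two.mp heq
    refine ⟨x, y, hxy, ?_⟩
    rw [twins_iff G hxy]
    rw [← zbStep_pair_fix_iff G hxy]
    rw [← blocking_pair_iff G h hxy]
    exact hWxy ▸ hWb
  · rintro ⟨x, y, hxy, htw⟩
    have hcond := (twins_iff G hxy).mp htw
    have hfix := (zbStep_pair_fix_iff G hxy).mpr hcond
    have hb : IsZeroBlocking G {x, y} := (blocking_pair_iff G h hxy).mpr hfix
    apply le_antisymm
    · calc zbNum G ≤ ({x, y} : Set V).encard := iInf₂_le _ hb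
        _ = 2 := Set.encard_pair hxy
    · exact le_iInf₂ fun W hW => two_le_encard_of_blocking G h hW
end

section
/- In a path P_n or cycle C_n, a set W is a minimum zero blocking set if and only if its complement V \ W is a maximum stable (independent) set containing no leaves. -/
open Set

/-- `S` is a stable (independent) set containing no leaves, of maximum size among such sets. -/
def IsMaxLeaflessStable {V : Type*} (G : SimpleGraph V) (S : Set V) : Prop :=
  (S.Pairwise (fun a b => ¬ G.Adj a b) ∧ ∀ v ∈ S, ¬ ∃! u, G.Adj v u) ∧
    ∀ T : Set V, (T.Pairwise (fun a b => ¬ G.Adj a b) ∧ ∀ v ∈ T, ¬ ∃! u, G.Adj v u) → T.encard ≤ S.encard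

/-- `W` is a minimum zero blocking set of `G`. -/
def IsMinZeroBlocking {V : Type*} (G : SimpleGraph V) (W : Set V) : Prop :=
  IsZeroBlocking G W ∧ W.encard = zbNum G

/-! ### Auxiliary definitions and lemmas -/

/-- A fort: every vertex outside `F` adjacent to some vertex of `F` has at least two
neighbors in `F`. -/
def ZFort {V : Type*} (G : SimpleGraph V) (F : Set V) : Prop :=
  ∀ b ∉ F, ∀ w ∈ F, G.Adj b w → ∃ w' ∈ F, w' ≠ w ∧ G.Adj b w'

/-- Leafless stable set. -/
def LeaflessStable {V : Type*} (G : SimpleGraph V) (S : Set V) : Prop :=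
  S.Pairwise (fun a b => ¬ G.Adj a b) ∧ ∀ v ∈ S, ¬ ∃! u, G.Adj v u

section Lemmas

variable {V : Type*} (G : SimpleGraph V)

lemma iterate_zbStep_subset (W : Set V) : ∀ k, (zbStep G)^[k] W ⊆ W := by
  intro k
  induction k with
  | zero => exact fun _ h => h
  | succ k ih =>
    rw [Function.iterate_succ_apply']
    exact (zbStep_subset G _).trans ih

lemma zbStep_eq_of_fort {F : Set V} (h : ZFort G F) : zbStep G F = F := by
  refine Set.Subset.antisymm (zbStep_subset G F) (fun w hw => ⟨hw, ?_⟩)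
  rintro ⟨b, hb, hadj, huniq⟩
  obtain ⟨w', hw', hne, hadj'⟩ := h b hb w hw hadj
  exact hne (huniq w' hw' hadj')

lemma fort_of_zbStep_eq {F : Set V} (h : zbStep G F = F) : ZFort G F := by
  intro b hb w hw hadj
  by_contra hcon
  push_neg at hcon
  have hmem : w ∈ zbStep G F := h.symm ▸ hw
  exact hmem.2 ⟨b, hb, hadj, fun w' hw' ha' => by
    by_contra hne
    exact hcon w' hw' hne ha'⟩

lemma blocking_of_fort {F : Set V} (h : ZFort G F) (hne : F.Nonempty) :
    IsZeroBlocking G F := fun k => by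
  rw [Function.iterate_fixed (zbStep_eq_of_fort G h)]
  exact hne

lemma exists_fort_of_blocking [Finite V] {W : Set V} (h : IsZeroBlocking G W) :
    ∃ F, F ⊆ W ∧ F.Nonempty ∧ ZFort G F := by
  set g : ℕ → ℕ := fun k => ((zbStep G)^[k] W).ncard with hg
  obtain ⟨m, ⟨k, hk⟩, hmin⟩ := Nat.lt_wfRel.wf.has_min (Set.range g) ⟨g 0, 0, rfl⟩
  refine ⟨(zbStep G)^[k] W, iterate_zbStep_subset G W k, h k, fort_of_zbStep_eq G ?_⟩
  have hle : ¬ g (k + 1) < m := hmin (g (k + 1)) ⟨k + 1, rfl⟩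
  have hsub : zbStep G ((zbStep G)^[k] W) ⊆ (zbStep G)^[k] W := zbStep_subset G _
  have hcard : ((zbStep G)^[k] W).ncard ≤ (zbStep G ((zbStep G)^[k] W)).ncard := by
    have e1 : g (k + 1) = (zbStep G ((zbStep G)^[k] W)).ncard := by
      simp only [hg, Function.iterate_succ_apply']
    have e2 : g k = ((zbStep G)^[k] W).ncard := rfl
    omega
  exact Set.eq_of_subset_of_ncard_le hsub hcard (Set.toFinite _)

lemma fort_compl_of_leaflessStable {S : Set V} (h : LeaflessStable G S) : ZFort G Sᶜ := by
  intro b hb w hw hadj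
  rw [Set.notMem_compl_iff] at hb
  have hne' : ¬ ∀ u, G.Adj b u → u = w := fun hall => h.2 b hb ⟨w, hadj, hall⟩
  push_neg at hne'
  obtain ⟨u, hu, hne⟩ := hne'
  exact ⟨u, fun huS => h.1 hb huS (G.ne_of_adj hu) hu, hne, hu⟩

lemma compl_nonempty_of_leaflessStable {S : Set V} (hedge : ∃ a b, G.Adj a b)
    (h : LeaflessStable G S) : Sᶜ.Nonempty := by
  obtain ⟨a, b, hab⟩ := hedge
  by_contra hcon
  rw [Set.not_nonempty_iff_eq_empty, Set.compl_empty_iff] at hcon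
  exact h.1 (hcon ▸ Set.mem_univ a) (hcon ▸ Set.mem_univ b) (G.ne_of_adj hab) hab

lemma leaflessStable_compl_of_fort
    (hdeg : ∀ x a b c : V, G.Adj x a → G.Adj x b → G.Adj x c → a = b ∨ a = c ∨ b = c)
    (hconn : G.Preconnected) {F : Set V} (hF : ZFort G F) (hne : F.Nonempty) :
    LeaflessStable G Fᶜ := by
  have stable : ∀ u v, u ∉ F → v ∉ F → ¬ G.Adj u v := by
    intro u v hu hv hadj
    have spread : ∀ x z : V, (x ∉ F ∧ ∃ y, G.Adj x y ∧ y ∉ F) → G.Adj x z →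
        (z ∉ F ∧ ∃ y, G.Adj z y ∧ y ∉ F) := by
      rintro x z ⟨hx, y, hxy, hy⟩ hxz
      have hznF : z ∉ F := by
        intro hz
        obtain ⟨w', hw', hne', hadj'⟩ := hF x hx z hz hxz
        rcases hdeg x y z w' hxy hxz hadj' with h | h | h
        · exact hy (h ▸ hz)
        · exact hy (h ▸ hw')
        · exact hne' h.symm
      exact ⟨hznF, x, hxz.symm, hx⟩
    have key : ∀ {a b : V} (_ : G.Walk a b),
        (a ∉ F ∧ ∃ y, G.Adj a y ∧ y ∉ F) → (b ∉ F ∧ ∃ y, G.Adj b y ∧ y ∉ F) := by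
      intro a b p
      induction p with
      | nil => exact id
      | cons hadj q ih => exact fun ha => ih (spread _ _ ha hadj)
    obtain ⟨f, hf⟩ := hne
    obtain ⟨p⟩ := hconn u f
    exact (key p ⟨hu, v, hadj, hv⟩).1 hf
  constructor
  · intro a ha b hb _ hadj
    exact stable a b ha hb hadj
  · rintro v hv ⟨u, hu, huniq⟩
    by_cases huF : u ∈ F
    · obtain ⟨w', _, hne', hadj'⟩ := hF v hv u huF hu
      exact hne' (huniq w' hadj')
    · exact stable v u hv huF hu

lemma compl_encard_le {V : Type*} [Fintype V] {A B : Set V} (h : A.encard ≤ B.encard) :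
    Bᶜ.encard ≤ Aᶜ.encard := by
  rw [← Set.Finite.cast_ncard_eq (Set.toFinite _), ← Set.Finite.cast_ncard_eq (Set.toFinite _)]
    at h ⊢
  have hA := Set.ncard_add_ncard_compl A (Set.toFinite _)
  have hB := Set.ncard_add_ncard_compl B (Set.toFinite _)
  have h' : A.ncard ≤ B.ncard := by exact_mod_cast h
  exact_mod_cast (by omega : Bᶜ.ncard ≤ Aᶜ.ncard)

theorem main_iff {V : Type*} [Fintype V] (G : SimpleGraph V)
    (hdeg : ∀ x a b c : V, G.Adj x a → G.Adj x b → G.Adj x c → a = b ∨ a = c ∨ b = c)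
    (hconn : G.Preconnected) (hedge : ∃ a b, G.Adj a b) (W : Set V) :
    IsMinZeroBlocking G W ↔ IsMaxLeaflessStable G Wᶜ := by
  constructor
  · rintro ⟨hblock, hcard⟩
    obtain ⟨F, hFW, hFne, hFort⟩ := exists_fort_of_blocking G hblock
    have hFblock := blocking_of_fort G hFort hFne
    have h1 : zbNum G ≤ F.encard := iInf₂_le F hFblock
    have hWF : W.encard ≤ F.encard := hcard ▸ h1
    have hFW' : F = W :=
      (Set.toFinite F).eq_of_subset_of_encard_le hFW hWF
    subst hFW'
    have hLS : LeaflessStable G Fᶜ := leaflessStable_compl_of_fort G hdeg hconn hFort hFne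
    refine ⟨⟨hLS.1, hLS.2⟩, fun T hT => ?_⟩
    have hTblock : IsZeroBlocking G Tᶜ :=
      blocking_of_fort G (fort_compl_of_leaflessStable G ⟨hT.1, hT.2⟩)
        (compl_nonempty_of_leaflessStable G hedge ⟨hT.1, hT.2⟩)
    have h2 : F.encard ≤ Tᶜ.encard := hcard ▸ iInf₂_le Tᶜ hTblock
    have h3 := compl_encard_le h2
    rwa [compl_compl] at h3
  · rintro ⟨hLS, hmax⟩
    have hfort : ZFort G W := by
      have := fort_compl_of_leaflessStable G (⟨hLS.1, hLS.2⟩ : LeaflessStable G Wᶜ)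
      rwa [compl_compl] at this
    have hne : W.Nonempty := by
      have := compl_nonempty_of_leaflessStable G hedge
        (⟨hLS.1, hLS.2⟩ : LeaflessStable G Wᶜ)
      rwa [compl_compl] at this
    have hblock := blocking_of_fort G hfort hne
    refine ⟨hblock, le_antisymm ?_ (iInf₂_le W hblock)⟩
    refine le_iInf₂ fun W' hW' => ?_
    obtain ⟨F, hFW', hFne, hFort⟩ := exists_fort_of_blocking G hW'
    have hLSF : LeaflessStable G Fᶜ := leaflessStable_compl_of_fort G hdeg hconn hFort hFne
    have h1 : Fᶜ.encard ≤ Wᶜ.encard := hmax Fᶜ ⟨hLSF.1, hLSF.2⟩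
    have h2 := compl_encard_le h1
    rw [compl_compl, compl_compl] at h2
    exact h2.trans (Set.encard_mono hFW')

end Lemmas

theorem minZeroBlocking_path_cycle (n : ℕ) :
    ((2 ≤ n) → ∀ W : Set (Fin n),
      IsMinZeroBlocking (SimpleGraph.pathGraph n) W ↔
        IsMaxLeaflessStable (SimpleGraph.pathGraph n) Wᶜ) ∧
    ((3 ≤ n) → ∀ W : Set (Fin n),
      IsMinZeroBlocking (SimpleGraph.cycleGraph n) W ↔
        IsMaxLeaflessStable (SimpleGraph.cycleGraph n) Wᶜ) := by
  constructor
  · intro hn W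
    obtain ⟨m, rfl⟩ : ∃ m, n = m + 2 := ⟨n - 2, by omega⟩
    refine main_iff _ ?_ (SimpleGraph.pathGraph_preconnected _) ⟨0, 1, ?_⟩ W
    · intro x a b c h1 h2 h3
      rw [SimpleGraph.pathGraph_adj] at h1 h2 h3
      have : (a : ℕ) = b ∨ (a : ℕ) = c ∨ (b : ℕ) = c := by omega
      rcases this with h | h | h
      · exact Or.inl (Fin.val_injective h)
      · exact Or.inr (Or.inl (Fin.val_injective h))
      · exact Or.inr (Or.inr (Fin.val_injective h))
    · rw [SimpleGraph.pathGraph_adj]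
      simp
  · intro hn W
    obtain ⟨m, rfl⟩ : ∃ m, n = (m + 1) + 2 := ⟨n - 3, by omega⟩
    refine main_iff _ ?_ SimpleGraph.cycleGraph_preconnected
      ⟨0, 1, SimpleGraph.pathGraph_le_cycleGraph (by rw [SimpleGraph.pathGraph_adj]; simp)⟩ W
    intro x a b c h1 h2 h3
    rw [SimpleGraph.cycleGraph_adj] at h1 h2 h3
    have key : ∀ y : Fin (m + 1 + 2), (x - y = 1 ∨ y - x = 1) → y = x - 1 ∨ y = x + 1 := by
      intro y hy
      rcases hy with h | h
      · left; rw [← h, sub_sub_cancel]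
      · right; rw [← h]; exact (add_sub_cancel x y).symm
    rcases key a h1 with ha | ha <;> rcases key b h2 with hb | hb <;>
      rcases key c h3 with hc | hc <;> rw [ha, hb, hc] <;> simp
end

section
/- For m ≥ 2 and n ≥ 1, the fan mK₁ + P_n and (for n ≥ 3) the cone mK₁ + C_n satisfy B(mK₁ + P_n) = B(mK₁ + C_n) = 2. -/
open Set

/-- The join `G + H` of two graphs on disjoint vertex sets. -/
def graphJoin {α β : Type*} (G : SimpleGraph α) (H : SimpleGraph β) :
    SimpleGraph (α ⊕ β) where
  Adj x y := match x, y with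
    | Sum.inl a, Sum.inl b => G.Adj a b
    | Sum.inr a, Sum.inr b => H.Adj a b
    | Sum.inl _, Sum.inr _ => True
    | Sum.inr _, Sum.inl _ => True
  symm := ⟨by rintro (a | a) (b | b) h <;> simp_all [SimpleGraph.adj_comm]⟩
  loopless := ⟨by rintro (a | a) h <;> simp_all⟩

/-- If a graph has two (nonadjacent) twin vertices and no isolated vertices,
its zero blocking number is 2. -/
lemma zbNum_eq_two_of_twins {V : Type*} (G : SimpleGraph V) (u v : V) (huv : u ≠ v)
    (htwin : ∀ b, G.Adj b u ↔ G.Adj b v)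
    (hnbr : ∀ x : V, ∃ y, G.Adj x y) : zbNum G = 2 := by
  apply le_antisymm
  · -- {u, v} is a zero blocking set
    have hfix : zbStep G ({u, v} : Set V) = {u, v} := by
      apply Set.eq_of_subset_of_subset
      · intro x hx; exact hx.1
      · intro w hw
        refine ⟨hw, ?_⟩
        rintro ⟨b, hbW, hbw, huniq⟩
        rcases hw with rfl | rfl
        · exact huv (huniq v (Or.inr rfl) ((htwin b).1 hbw)).symm
        · exact huv (huniq u (Or.inl rfl) ((htwin b).2 hbw))
    have hblock : IsZeroBlocking G ({u, v} : Set V) := by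
      intro k
      rw [Function.iterate_fixed hfix]
      exact ⟨u, Or.inl rfl⟩
    calc zbNum G ≤ ({u, v} : Set V).encard := iInf₂_le _ hblock
      _ = 2 := Set.encard_pair huv
  · -- every zero blocking set has at least two elements
    refine le_iInf₂ fun W hW => ?_
    obtain ⟨w, hw⟩ := hW 0
    by_contra hlt
    push_neg at hlt
    have hsub : W.Subsingleton := by
      by_contra hns
      rw [Set.not_subsingleton_iff] at hns
      obtain ⟨a, ha, b, hb, hab⟩ := hns
      have : (1 : ℕ∞) < W.encard := Set.one_lt_encard_iff.mpr ⟨a, b, ha, hb, hab⟩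
      have : (2 : ℕ∞) ≤ W.encard := Order.add_one_le_of_lt this
      exact absurd this (not_le.mpr hlt)
    have hWs : W = {w} := hsub.eq_singleton_of_mem hw
    have hempty : zbStep G W = ∅ := by
      ext x
      simp only [Set.mem_empty_iff_false, iff_false]
      rintro ⟨hxW, hno⟩
      have hxw : x = w := by rw [hWs] at hxW; exact hxW
      subst hxw
      obtain ⟨y, hy⟩ := hnbr x
      refine hno ⟨y, ?_, hy.symm, ?_⟩
      · rw [hWs]; exact fun h => hy.ne' h
      · intro w' hw' _
        rw [hWs] at hw' hxW
        rw [hw', hxW]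
    have h1 := hW 1
    rw [Function.iterate_one, hempty] at h1
    exact Set.not_nonempty_empty h1

theorem zbNum_fan_cone (m n : ℕ) (hm : 2 ≤ m) (hn : 1 ≤ n) :
    zbNum (graphJoin (⊥ : SimpleGraph (Fin m)) (SimpleGraph.pathGraph n)) = 2 ∧
    (3 ≤ n → zbNum (graphJoin (⊥ : SimpleGraph (Fin m)) (SimpleGraph.cycleGraph n)) = 2) := by
  have key : ∀ (H : SimpleGraph (Fin n)),
      zbNum (graphJoin (⊥ : SimpleGraph (Fin m)) H) = 2 := by
    intro H
    apply zbNum_eq_two_of_twins _ (Sum.inl ⟨0, by omega⟩) (Sum.inl ⟨1, by omega⟩)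
    · simp [Fin.ext_iff]
    · rintro (a | a) <;> simp [graphJoin]
    · rintro (x | x)
      · exact ⟨Sum.inr ⟨0, by omega⟩, trivial⟩
      · exact ⟨Sum.inl ⟨0, by omega⟩, trivial⟩
  exact ⟨key _, fun _ => key _⟩
end

section
/- For n ≥ 2, a zero blocking set W of the hypercube Q_n has size n (i.e., is minimum) if and only if W = N(x) for some vertex x, or else n = 4 and W = N(y) Δ N(z) for vertices y, z with |y Δ z| = 2. -/
open Set

/-- The `n`-dimensional hypercube: vertices are subsets of `{1,…,n}`, adjacent
iff their symmetric difference has exactly one element. -/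
def cubeGraph (n : ℕ) : SimpleGraph (Finset (Fin n)) where
  Adj x y := (symmDiff x y).card = 1
  symm := ⟨by intro x y h; rwa [symmDiff_comm]⟩
  loopless := ⟨by intro x h; simp [symmDiff_self] at h⟩


namespace ZBAux

open Finset
open scoped symmDiff

variable {α : Type*} [DecidableEq α]

lemma sd_cancel (a b : Finset α) : a ∆ (a ∆ b) = b := symmDiff_symmDiff_cancel_left a b
lemma sd_eq_single {v w : Finset α} {i : α} (h : v ∆ w = {i}) : w = v ∆ {i} := by
  rw [← h, symmDiff_symmDiff_cancel_left]
lemma sd_subset_union (a b : Finset α) : a ∆ b ⊆ a ∪ b := by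
  intro x; simp [Finset.mem_symmDiff]; tauto
lemma sd_insert {a : Finset α} {i : α} (h : i ∉ a) : a ∆ {i} = insert i a := by
  ext x; simp [Finset.mem_symmDiff]; aesop
lemma sd_single_mem {a : Finset α} {i : α} (h : i ∈ a) : a ∆ {i} = a.erase i := by
  ext x; simp [Finset.mem_symmDiff]; aesop
lemma sd_insert_insert {a b : Finset α} {i : α} (ha : i ∉ a) (hb : i ∉ b) :
    (insert i a) ∆ (insert i b) = a ∆ b := by
  ext x; simp [Finset.mem_symmDiff]; aesop
lemma sd_erase_both (a b : Finset α) (i : α) :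
    (a.erase i) ∆ (b.erase i) = (a ∆ b).erase i := by
  ext x; simp [Finset.mem_symmDiff]; tauto
lemma sd_not_mem {a b : Finset α} {i : α} (h : i ∉ a ∆ b) (ha : i ∈ a) : i ∈ b := by
  rw [Finset.mem_symmDiff] at h; tauto
lemma sd_not_mem' {a b : Finset α} {i : α} (h : i ∉ a ∆ b) (ha : i ∉ a) : i ∉ b := by
  rw [Finset.mem_symmDiff] at h; tauto

def IsFort (u : Finset α) (S : Finset (Finset α)) : Prop :=
  (∀ s ∈ S, s ⊆ u) ∧
  ∀ v : Finset α, v ⊆ u → v ∉ S → ∀ w ∈ S, (v ∆ w).card = 1 →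
    ∃ w' ∈ S, w' ≠ w ∧ (v ∆ w').card = 1

def Indep (S : Finset (Finset α)) : Prop :=
  ∀ s ∈ S, ∀ t ∈ S, (s ∆ t).card ≠ 1

def projA (i : α) (S : Finset (Finset α)) : Finset (Finset α) := S.filter (fun s => i ∉ s)
def projB (i : α) (S : Finset (Finset α)) : Finset (Finset α) :=
  (S.filter (fun s => i ∈ s)).image (fun s => s.erase i)
def projF (i : α) (S : Finset (Finset α)) : Finset (Finset α) := projA i S ∪ projB i S

lemma mem_projA {i : α} {S : Finset (Finset α)} {v : Finset α} :
    v ∈ projA i S ↔ v ∈ S ∧ i ∉ v := by simp [projA]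

lemma mem_projB {i : α} {S : Finset (Finset α)} {v : Finset α} :
    v ∈ projB i S ↔ i ∉ v ∧ insert i v ∈ S := by
  simp only [projB, Finset.mem_image, Finset.mem_filter]
  constructor
  · rintro ⟨s, ⟨hsS, his⟩, rfl⟩
    exact ⟨Finset.notMem_erase i s, by rwa [Finset.insert_erase his]⟩
  · rintro ⟨hiv, hS⟩
    exact ⟨insert i v, ⟨hS, Finset.mem_insert_self i v⟩, Finset.erase_insert hiv⟩

lemma proj_fort {u : Finset α} {S : Finset (Finset α)} (hf : IsFort u S) {i : α} (hi : i ∈ u) :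
    IsFort (u.erase i) (projF i S) := by
  constructor
  · intro t ht
    rcases Finset.mem_union.1 ht with ht | ht
    · rw [mem_projA] at ht
      exact Finset.subset_erase.2 ⟨hf.1 t ht.1, ht.2⟩
    · rw [mem_projB] at ht
      refine Finset.subset_erase.2 ⟨?_, ht.1⟩
      exact fun x hx => hf.1 _ ht.2 (Finset.mem_insert_of_mem hx)
  · intro v hvu hvF w hwF hvw
    have hiv : i ∉ v := fun h => (Finset.mem_erase.1 (hvu h)).1 rfl
    have hvS : v ∉ S := fun h => hvF (Finset.mem_union_left _ (mem_projA.2 ⟨h, hiv⟩))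
    have hvS' : insert i v ∉ S := fun h =>
      hvF (Finset.mem_union_right _ (mem_projB.2 ⟨hiv, h⟩))
    have hvu' : v ⊆ u := hvu.trans (Finset.erase_subset i u)
    rcases Finset.mem_union.1 hwF with hw | hw
    · rw [mem_projA] at hw
      obtain ⟨w'', hw''S, hw''ne, hw''c⟩ := hf.2 v hvu' hvS w hw.1 hvw
      obtain ⟨j, hj⟩ := Finset.card_eq_one.1 hw''c
      by_cases hij : j = i
      · exfalso
        subst hij
        have : w'' = insert j v := by rw [sd_eq_single hj, sd_insert hiv]
        exact hvS' (this ▸ hw''S)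
      · have hiw'' : i ∉ w'' := by
          apply sd_not_mem' (a := v) _ hiv
          rw [hj]; simp [Ne.symm hij]
        exact ⟨w'', Finset.mem_union_left _ (mem_projA.2 ⟨hw''S, hiw''⟩), hw''ne, hw''c⟩
    · rw [mem_projB] at hw
      obtain ⟨hiw, hwbar⟩ := hw
      have hc : ((insert i v) ∆ (insert i w)).card = 1 := by
        rw [sd_insert_insert hiv hiw]; exact hvw
      obtain ⟨w'', hw''S, hw''ne, hw''c⟩ := hf.2 (insert i v)
        (Finset.insert_subset hi hvu') hvS' (insert i w) hwbar hc
      obtain ⟨j, hj⟩ := Finset.card_eq_one.1 hw''c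
      by_cases hij : j = i
      · exfalso
        subst hij
        have : w'' = (insert j v) ∆ {j} := sd_eq_single hj
        rw [sd_single_mem (Finset.mem_insert_self j v), Finset.erase_insert hiv] at this
        exact hvS (this ▸ hw''S)
      · have hiw'' : i ∈ w'' := by
          apply sd_not_mem (a := insert i v) _ (Finset.mem_insert_self i v)
          rw [hj]; simp [Ne.symm hij]
        refine ⟨w''.erase i, Finset.mem_union_right _ (mem_projB.2
          ⟨Finset.notMem_erase i _, by rwa [Finset.insert_erase hiw'']⟩), ?_, ?_⟩
        · intro h
          apply hw''ne
          rw [← Finset.insert_erase hiw'', h]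
        · have : v ∆ (w''.erase i) = ((insert i v) ∆ w'').erase i := by
            rw [← sd_erase_both, Finset.erase_insert hiv]
          rw [this, hj, Finset.erase_eq_of_notMem (by simp only [Finset.mem_singleton]; exact fun h => hij h.symm)]
          simp
  
/-- Spanning: in a nonempty fort, the members cannot all agree on a direction `j ∈ u`. -/
lemma fort_span {u : Finset α} {S : Finset (Finset α)} (hf : IsFort u S)
    {j : α} (hj : j ∈ u) (hconst : ∀ s ∈ S, ∀ t ∈ S, (j ∈ s ↔ j ∈ t))
    (hne : S.Nonempty) : False := by
  obtain ⟨s, hs⟩ := hne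
  set v := s ∆ {j} with hv
  have hvj : j ∈ v ↔ j ∉ s := by
    simp [hv, Finset.mem_symmDiff]
  have hvs : v ∆ s = {j} := by
    rw [hv, symmDiff_comm s, symmDiff_assoc]; simp
  have hvset : v ∆ {j} = s := by
    rw [hv, symmDiff_assoc]; simp
  have hvu : v ⊆ u := by
    refine Finset.Subset.trans (sd_subset_union _ _) ?_
    rw [Finset.union_subset_iff]
    exact ⟨hf.1 s hs, by simpa using hj⟩
  have hvS : v ∉ S := fun hvS => by
    have := hconst v hvS s hs; tauto
  obtain ⟨w', hw'S, hw'ne, hw'c⟩ := hf.2 v hvu hvS s hs (by rw [hvs]; rfl)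
  have hjw' : j ∈ v ∆ w' := by
    rw [Finset.mem_symmDiff]
    have h1 := hconst w' hw'S s hs
    tauto
  have hsingle : v ∆ w' = {j} := by
    obtain ⟨k, hk⟩ := Finset.card_eq_one.1 hw'c
    rw [hk] at hjw' ⊢
    simp only [Finset.mem_singleton] at hjw'
    rw [hjw']
  exact hw'ne (by rw [sd_eq_single hsingle, hvset])

lemma projF_card {i : α} {S : Finset (Finset α)} :
    S.card = (projF i S).card + (projA i S ∩ projB i S).card := by
  have h1 : S.card = (S.filter (fun s => i ∉ s)).card + (S.filter (fun s => i ∈ s)).card := by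
    rw [add_comm]
    rw [← Finset.card_filter_add_card_filter_not (p := fun s => i ∈ s)]
  have h2 : (projB i S).card = (S.filter (fun s => i ∈ s)).card := by
    apply Finset.card_image_of_injOn
    intro a ha b hb hab
    simp only [Finset.mem_coe, Finset.mem_filter] at ha hb
    simp only at hab
    rw [← Finset.insert_erase ha.2, hab, Finset.insert_erase hb.2]
  have h3 := Finset.card_union_add_card_inter (projA i S) (projB i S)
  rw [projF]
  have : (projA i S).card = (S.filter (fun s => i ∉ s)).card := rfl
  omega

lemma projF_nonempty {i : α} {S : Finset (Finset α)} (hne : S.Nonempty) :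
    (projF i S).Nonempty := by
  obtain ⟨s, hs⟩ := hne
  by_cases hi : i ∈ s
  · exact ⟨s.erase i, Finset.mem_union_right _ (mem_projB.2
      ⟨Finset.notMem_erase i s, by rwa [Finset.insert_erase hi]⟩)⟩
  · exact ⟨s, Finset.mem_union_left _ (mem_projA.2 ⟨hs, hi⟩)⟩

lemma sd_empty (t : Finset α) : (∅ : Finset α) ∆ t = t := by
  ext x; simp [Finset.mem_symmDiff]

lemma sd_empty' (t : Finset α) : t ∆ (∅ : Finset α) = t := by
  ext x; simp [Finset.mem_symmDiff]

lemma card_sd_add (a b : Finset α) :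
    (a ∆ b).card + 2 * (a ∩ b).card = a.card + b.card := by
  have h1 : (a ∆ b) ∪ (a ∩ b) = a ∪ b := by
    ext x; simp [Finset.mem_symmDiff]; tauto
  have h2 : Disjoint (a ∆ b) (a ∩ b) := by
    simp only [Finset.disjoint_left, Finset.mem_symmDiff, Finset.mem_inter]
    tauto
  have h3 := Finset.card_union_of_disjoint h2
  have h4 := Finset.card_union_add_card_inter a b
  rw [h1] at h3
  omega

lemma pair_eq {p : Finset α} {x y : α} (hx : x ∈ p) (hy : y ∈ p) (hxy : x ≠ y)
    (hc : p.card = 2) : p = {x, y} := by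
  symm
  apply Finset.eq_of_subset_of_card_le
  · exact Finset.insert_subset hx (Finset.singleton_subset_iff.2 hy)
  · rw [hc, Finset.card_insert_of_notMem (by simp [hxy]), Finset.card_singleton]

lemma inter_pair {p q : Finset α} {a b : α} (h : p ∩ q ≠ ∅) (hq : q = {a, b}) :
    a ∈ p ∨ b ∈ p := by
  rw [← Finset.nonempty_iff_ne_empty] at h
  obtain ⟨x, hx⟩ := h
  rw [Finset.mem_inter, hq] at hx
  rcases (by simpa using hx.2 : x = a ∨ x = b) with rfl | rfl
  · exact Or.inl hx.1
  · exact Or.inr hx.1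

lemma cover_card {β : Type*} [DecidableEq β] {u : Finset α} {P : Finset β} (f : β → Finset α)
    (hc : ∀ i ∈ u, ∃ p ∈ P, i ∈ f p) (h2 : ∀ p ∈ P, (f p).card ≤ 2) :
    u.card ≤ 2 * P.card := by
  have hsub : u ⊆ P.biUnion f := by
    intro i hi
    obtain ⟨p, hp, hip⟩ := hc i hi
    exact Finset.mem_biUnion.2 ⟨p, hp, hip⟩
  calc u.card ≤ (P.biUnion f).card := Finset.card_le_card hsub
    _ ≤ ∑ p ∈ P, (f p).card := Finset.card_biUnion_le
    _ ≤ P.card * 2 := Finset.sum_le_card_nsmul P _ 2 h2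
    _ = 2 * P.card := by ring

/-- Classification of intersecting families of 2-element sets. -/
lemma intersecting_pairs {P : Finset (Finset α)} (h2 : ∀ p ∈ P, p.card = 2)
    (hint : ∀ p ∈ P, ∀ q ∈ P, p ∩ q ≠ ∅) (hne : P.Nonempty) :
    (∃ a, ∀ p ∈ P, a ∈ p) ∨
    (∃ a b c : α, a ≠ b ∧ a ≠ c ∧ b ≠ c ∧ P = {({a, b} : Finset α), {a, c}, {b, c}}) := by
  obtain ⟨p0, hp0⟩ := hne
  obtain ⟨a, b, hab, hp0e⟩ := Finset.card_eq_two.1 (h2 p0 hp0)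
  by_cases hsa : ∀ p ∈ P, a ∈ p
  · exact Or.inl ⟨a, hsa⟩
  push_neg at hsa
  obtain ⟨q1, hq1P, haq1⟩ := hsa
  have hbq1 : b ∈ q1 := by
    rcases inter_pair (hint q1 hq1P p0 hp0) hp0e with h | h
    · exact absurd h haq1
    · exact h
  obtain ⟨c, hcq1, hcb⟩ : ∃ c ∈ q1, c ≠ b := by
    obtain ⟨x, y, hxy, hq1e⟩ := Finset.card_eq_two.1 (h2 q1 hq1P)
    by_cases hxb : x = b
    · exact ⟨y, by simp [hq1e], by rw [← hxb]; exact fun h => hxy h.symm⟩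
    · exact ⟨x, by simp [hq1e], hxb⟩
  have hq1e : q1 = {b, c} := pair_eq hbq1 hcq1 (Ne.symm hcb) (h2 q1 hq1P)
  have hca : c ≠ a := fun h => haq1 (h ▸ hcq1)
  by_cases hsb : ∀ p ∈ P, b ∈ p
  · exact Or.inl ⟨b, hsb⟩
  push_neg at hsb
  obtain ⟨q2, hq2P, hbq2⟩ := hsb
  have haq2 : a ∈ q2 := by
    rcases inter_pair (hint q2 hq2P p0 hp0) hp0e with h | h
    · exact h
    · exact absurd h hbq2
  have hcq2 : c ∈ q2 := by
    rcases inter_pair (hint q2 hq2P q1 hq1P) hq1e with h | h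
    · exact absurd h hbq2
    · exact h
  have hq2e : q2 = {a, c} := pair_eq haq2 hcq2 (Ne.symm hca) (h2 q2 hq2P)
  refine Or.inr ⟨a, b, c, hab, Ne.symm hca, Ne.symm hcb, ?_⟩
  apply Finset.Subset.antisymm
  · intro p hp
    have hpb := inter_pair (hint p hp p0 hp0) hp0e
    have hpb1 := inter_pair (hint p hp q1 hq1P) hq1e
    have hpb2 := inter_pair (hint p hp q2 hq2P) hq2e
    simp only [Finset.mem_insert, Finset.mem_singleton]
    rcases hpb with hap | hbp
    · rcases hpb1 with hbp | hcp
      · exact Or.inl (pair_eq hap hbp hab (h2 p hp))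
      · exact Or.inr (Or.inl (pair_eq hap hcp (Ne.symm hca) (h2 p hp)))
    · rcases hpb2 with hap | hcp
      · exact Or.inl (pair_eq hap hbp hab (h2 p hp))
      · exact Or.inr (Or.inr (pair_eq hbp hcp (Ne.symm hcb) (h2 p hp)))
  · intro p hp
    simp only [Finset.mem_insert, Finset.mem_singleton] at hp
    rcases hp with rfl | rfl | rfl
    · rwa [← hp0e]
    · rwa [← hq2e]
    · rwa [← hq1e]

lemma inter_card_of_sd_two {a b : Finset α} (ha : a.card = 2) (hb : b.card = 2)
    (h : (a ∆ b).card = 2) : (a ∩ b).card = 1 := by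
  have := card_sd_add a b; omega

theorem star_bound (u : Finset α) (T : Finset (Finset α))
    (hsub : ∀ t ∈ T, t ⊆ u) (h0 : (∅ : Finset α) ∈ T) (heven : ∀ t ∈ T, Even t.card)
    (hstar : ∀ s ∈ T, ∀ i ∈ u, ∃ t ∈ T, (s ∆ t).card = 2 ∧ i ∈ s ∆ t) :
    u.card ≤ T.card ∧
    (T.card = u.card →
      (∃ a ∈ u, T = insert ∅ ((u.erase a).image (fun b => ({a, b} : Finset α)))) ∨
      (u.card = 4 ∧ ∃ p q : Finset α, p.card = 2 ∧ q.card = 2 ∧ p ∩ q = ∅ ∧ p ∪ q = u ∧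
        T = {∅, p, q, u})) := by
  classical
  set P := T.filter (fun t => t.card = 2) with hP
  have hPmem : ∀ p, p ∈ P ↔ p ∈ T ∧ p.card = 2 := fun p => by simp [hP]
  have hPcover : ∀ i ∈ u, ∃ p ∈ P, i ∈ p := by
    intro i hi
    obtain ⟨t, htT, htc, hit⟩ := hstar ∅ h0 i hi
    rw [sd_empty] at htc hit
    exact ⟨t, (hPmem t).2 ⟨htT, htc⟩, hit⟩
  have hPu : u.card ≤ 2 * P.card := by
    apply cover_card id hPcover
    intro p hp; rw [hPmem] at hp; simp only [id]; omega
  have hPsubT : P ⊆ T := Finset.filter_subset _ _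
  have hPnotmem : (∅ : Finset α) ∉ P := by
    intro h; rw [hPmem] at h; simp at h
  have hPsubu : ∀ p ∈ P, p ⊆ u := fun p hp => hsub p (hPsubT hp)
  rcases Finset.eq_empty_or_nonempty u with rfl | hune
  · refine ⟨by simp, fun h => ?_⟩
    exfalso
    rw [Finset.card_empty, Finset.card_eq_zero] at h
    rw [h] at h0; simp at h0
  by_cases hbig : ∃ m ∈ T, 4 ≤ m.card
  · -- big case
    obtain ⟨m, hmT, hmmax⟩ := T.exists_max_image Finset.card ⟨∅, h0⟩
    have hm4 : 4 ≤ m.card := by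
      obtain ⟨m0, hm0T, hm04⟩ := hbig
      exact le_trans hm04 (hmmax m0 hm0T)
    set D2 := T.filter (fun t => (m ∆ t).card = 2) with hD2
    have hD2mem : ∀ t, t ∈ D2 ↔ t ∈ T ∧ (m ∆ t).card = 2 := fun t => by simp [hD2]
    have hD2cover : ∀ i ∈ u, ∃ t ∈ D2, i ∈ m ∆ t := by
      intro i hi
      obtain ⟨t, htT, htc, hit⟩ := hstar m hmT i hi
      exact ⟨t, (hD2mem t).2 ⟨htT, htc⟩, hit⟩
    have hD2u : u.card ≤ 2 * D2.card := by
      apply cover_card (fun t => m ∆ t) hD2cover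
      intro t ht; rw [hD2mem] at ht; omega
    have hD2w : ∀ t ∈ D2, t.card = m.card - 2 ∨ t.card = m.card := by
      intro t ht
      rw [hD2mem] at ht
      have h1 : t.card ≤ m.card := hmmax t ht.1
      have h2 : m.card ≤ t.card + 2 := by
        have hsub2 : m ⊆ t ∪ (m ∆ t) := by
          intro x hx; rw [Finset.mem_union, Finset.mem_symmDiff]; tauto
        calc m.card ≤ (t ∪ (m ∆ t)).card := Finset.card_le_card hsub2
          _ ≤ t.card + (m ∆ t).card := Finset.card_union_le _ _
          _ = t.card + 2 := by rw [ht.2]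
      obtain ⟨r, hr⟩ := heven t ht.1
      obtain ⟨r', hr'⟩ := heven m hmT
      omega
    have hmD2 : m ∉ D2 := by
      intro h
      rw [hD2mem, symmDiff_self] at h
      simp at h
    have hmu : m ⊆ u := hsub m hmT
    have hu4 : 4 ≤ u.card := le_trans hm4 (Finset.card_le_card hmu)
    by_cases hw6 : 6 ≤ m.card
    · -- w ≥ 6 : count ∅, P, m, D2, all disjoint
      have hX : (insert ∅ P) ∪ (insert m D2) ⊆ T := by
        intro t ht
        rcases Finset.mem_union.1 ht with h | h
        · rcases Finset.mem_insert.1 h with rfl | h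
          · exact h0
          · exact hPsubT h
        · rcases Finset.mem_insert.1 h with rfl | h
          · exact hmT
          · exact ((hD2mem t).1 h).1
      have hdisj : Disjoint (insert ∅ P) (insert m D2) := by
        rw [Finset.disjoint_left]
        intro t ht ht2
        have hc1 : t.card ≤ 2 := by
          rcases Finset.mem_insert.1 ht with rfl | h
          · simp
          · rw [hPmem] at h; omega
        rcases Finset.mem_insert.1 ht2 with rfl | h
        · omega
        · rcases hD2w t h with h' | h' <;> omega
      have hcard : P.card + D2.card + 2 ≤ T.card := by
        have hun := Finset.card_union_of_disjoint hdisj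
        have hle := Finset.card_le_card hX
        rw [hun, Finset.card_insert_of_notMem hPnotmem,
          Finset.card_insert_of_notMem hmD2] at hle
        omega
      exact ⟨by omega, fun h => by omega⟩
    · -- m.card = 4
      have hw4 : m.card = 4 := by
        obtain ⟨r, hr⟩ := heven m hmT; omega
      by_cases hu5 : 5 ≤ u.card
      · -- large ground set: injection from u \ m into card-4 elements
        have hKey : ∀ i ∈ u \ m, ∃ t, t ∈ T ∧ (m ∆ t).card = 2 ∧ i ∈ t ∧ t.card = 4 := by
          intro i hi
          rw [Finset.mem_sdiff] at hi
          obtain ⟨t, htD2, hit⟩ := hD2cover i hi.1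
          rw [hD2mem] at htD2
          have hitt : i ∈ t := by
            rw [Finset.mem_symmDiff] at hit; tauto
          refine ⟨t, htD2.1, htD2.2, hitt, ?_⟩
          rcases hD2w t ((hD2mem t).2 htD2) with h | h
          · exfalso
            have h2 := card_sd_add m t
            rw [htD2.2, hw4, h, hw4] at h2
            have hmt : m ∩ t = t := by
              apply Finset.eq_of_subset_of_card_le Finset.inter_subset_right
              omega
            have : t ⊆ m := by rw [← hmt]; exact Finset.inter_subset_left
            exact hi.2 (this hitt)
          · rwa [hw4] at h
        choose! g hg1 hg2 hg3 hg4 using hKey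
        have key : ∀ i ∈ u \ m, g i \ m = {i} := by
          intro i hi
          have higi : i ∈ g i \ m :=
            Finset.mem_sdiff.2 ⟨hg3 i hi, (Finset.mem_sdiff.1 hi).2⟩
          have hcard1 : (g i \ m).card = 1 := by
            have e1 := card_sd_add m (g i)
            have e2 := Finset.card_sdiff_add_card_inter (g i) m
            rw [hg2 i hi, hg4 i hi, hw4] at e1
            rw [hg4 i hi] at e2
            rw [Finset.inter_comm] at e2
            omega
          obtain ⟨x, hx⟩ := Finset.card_eq_one.1 hcard1
          rw [hx] at higi ⊢
          rw [Finset.mem_singleton] at higi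
          rw [higi]
        have hinj : Set.InjOn g ↑(u \ m) := by
          intro i hi j hj hij
          have k1 := key i (by simpa using hi)
          have k2 := key j (by simpa using hj)
          rw [hij] at k1
          rw [k1] at k2
          simpa using k2
        have hQcard : ((u \ m).image g).card = u.card - 4 := by
          rw [Finset.card_image_of_injOn hinj, Finset.card_sdiff_of_subset hmu, hw4]
        have hmQ : m ∉ (u \ m).image g := by
          intro h
          obtain ⟨i, hi, hgi⟩ := Finset.mem_image.1 h
          have h2 := key i hi
          rw [hgi] at h2
          rw [Finset.sdiff_self] at h2
          exact Finset.singleton_ne_empty i h2.symm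
        have hX : (insert ∅ P) ∪ (insert m ((u \ m).image g)) ⊆ T := by
          intro t ht
          rcases Finset.mem_union.1 ht with h | h
          · rcases Finset.mem_insert.1 h with rfl | h
            · exact h0
            · exact hPsubT h
          · rcases Finset.mem_insert.1 h with rfl | h
            · exact hmT
            · obtain ⟨i, hi, hgi⟩ := Finset.mem_image.1 h
              exact hgi ▸ hg1 i hi
        have hdisj : Disjoint (insert ∅ P) (insert m ((u \ m).image g)) := by
          rw [Finset.disjoint_left]
          intro t ht ht2
          have hc1 : t.card ≤ 2 := by
            rcases Finset.mem_insert.1 ht with rfl | h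
            · simp
            · rw [hPmem] at h; omega
          rcases Finset.mem_insert.1 ht2 with rfl | h
          · omega
          · obtain ⟨i, hi, hgi⟩ := Finset.mem_image.1 h
            rw [← hgi] at hc1
            rw [hg4 i hi] at hc1
            omega
        have hcard : P.card + (u.card - 4) + 2 ≤ T.card := by
          have hun := Finset.card_union_of_disjoint hdisj
          have hle := Finset.card_le_card hX
          rw [hun, Finset.card_insert_of_notMem hPnotmem,
            Finset.card_insert_of_notMem hmQ, hQcard] at hle
          omega
        exact ⟨by omega, fun h => by omega⟩
      · -- u.card = 4, m = u
        have hucard : u.card = 4 := by omega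
        have hmeq : m = u := Finset.eq_of_subset_of_card_le hmu (by omega)
        have hTeq : T = insert ∅ (insert u P) := by
          apply Finset.Subset.antisymm
          · intro t ht
            have hle4 : t.card ≤ 4 := by rw [← hw4]; exact hmmax t ht
            obtain ⟨r, hr⟩ := heven t ht
            simp only [Finset.mem_insert]
            rcases (by omega : t.card = 0 ∨ t.card = 2 ∨ t.card = 4) with h | h | h
            · exact Or.inl (Finset.card_eq_zero.1 h)
            · exact Or.inr (Or.inr ((hPmem t).2 ⟨ht, h⟩))
            · exact Or.inr (Or.inl
                (Finset.eq_of_subset_of_card_le (hsub t ht) (by omega)))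
          · intro t ht
            rcases Finset.mem_insert.1 ht with rfl | ht
            · exact h0
            · rcases Finset.mem_insert.1 ht with rfl | ht
              · exact hmeq ▸ hmT
              · exact hPsubT ht
        have huP : u ∉ P := by
          intro h; rw [hPmem] at h; omega
        have hstep : (∅ : Finset α) ∉ insert u P := by
          intro h
          rcases Finset.mem_insert.1 h with h | h
          · rw [← h, Finset.card_empty] at hucard; omega
          · exact hPnotmem h
        have hTcard : T.card = P.card + 2 := by
          rw [hTeq, Finset.card_insert_of_notMem hstep,
            Finset.card_insert_of_notMem huP]
        refine ⟨by omega, fun h => ?_⟩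
        right
        have hP2 : P.card = 2 := by omega
        obtain ⟨p, q, hpq, hPe⟩ := Finset.card_eq_two.1 hP2
        have hpP : p ∈ P := by rw [hPe]; simp
        have hqP : q ∈ P := by rw [hPe]; simp
        have hpu : p ⊆ u := hPsubu p hpP
        have hqu : q ⊆ u := hPsubu q hqP
        have hunion : p ∪ q = u := by
          apply Finset.eq_of_subset_of_card_le (Finset.union_subset hpu hqu)
          apply Finset.card_le_card
          intro i hi
          obtain ⟨r, hr, hir⟩ := hPcover i hi
          rw [hPe] at hr
          rcases Finset.mem_insert.1 hr with rfl | hr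
          · exact Finset.mem_union_left _ hir
          · rw [Finset.mem_singleton] at hr
            exact hr ▸ Finset.mem_union_right _ hir
        have hpc : p.card = 2 := ((hPmem p).1 hpP).2
        have hqc : q.card = 2 := ((hPmem q).1 hqP).2
        have hinter : p ∩ q = ∅ := by
          rw [← Finset.card_eq_zero]
          have := Finset.card_union_add_card_inter p q
          rw [hunion, hucard] at this
          omega
        refine ⟨hucard, p, q, hpc, hqc, hinter, hunion, ?_⟩
        rw [hTeq, hPe]
        ext x
        simp only [Finset.mem_insert, Finset.mem_singleton]
        tauto
  · -- small case : all cards ∈ {0,2}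
    push_neg at hbig
    have hT02 : ∀ t ∈ T, t.card = 0 ∨ t.card = 2 := by
      intro t ht
      have h1 := hbig t ht
      obtain ⟨r, hr⟩ := heven t ht
      omega
    have hTeq : T = insert ∅ P := by
      apply Finset.Subset.antisymm
      · intro t ht
        simp only [Finset.mem_insert]
        rcases hT02 t ht with h | h
        · exact Or.inl (Finset.card_eq_zero.1 h)
        · exact Or.inr ((hPmem t).2 ⟨ht, h⟩)
      · intro t ht
        rcases Finset.mem_insert.1 ht with rfl | ht
        · exact h0
        · exact hPsubT ht
    have hTcard : T.card = P.card + 1 := by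
      rw [hTeq, Finset.card_insert_of_notMem hPnotmem]
    have hstarstar : ∀ p ∈ P, ∀ i ∈ u, i ∉ p → ∃ q ∈ P, i ∈ q ∧ (p ∩ q).card = 1 := by
      intro p hp i hi hip
      obtain ⟨t, htT, htc, hit⟩ := hstar p (hPsubT hp) i hi
      rcases hT02 t htT with h | h
      · exfalso
        rw [Finset.card_eq_zero.1 h, sd_empty'] at hit
        exact hip hit
      · refine ⟨t, (hPmem t).2 ⟨htT, h⟩, ?_, ?_⟩
        · rw [Finset.mem_symmDiff] at hit; tauto
        · exact inter_card_of_sd_two ((hPmem p).1 hp).2 h htc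
    by_cases hdisj : ∃ p ∈ P, ∃ q ∈ P, p ∩ q = ∅
    · -- two disjoint pairs : |P| ≥ |u|
      obtain ⟨p, hpP, q, hqP, hpq0⟩ := hdisj
      have hpc : p.card = 2 := ((hPmem p).1 hpP).2
      have hqc : q.card = 2 := ((hPmem q).1 hqP).2
      have hpqne : p ≠ q := by
        intro h
        rw [h, Finset.inter_self] at hpq0
        rw [hpq0] at hqc
        simp at hqc
      have hKey : ∀ i ∈ u \ p, ∃ r, r ∈ P ∧ i ∈ r ∧ (p ∩ r).card = 1 := by
        intro i hi
        rw [Finset.mem_sdiff] at hi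
        obtain ⟨r, hr1, hr2, hr3⟩ := hstarstar p hpP i hi.1 hi.2
        exact ⟨r, hr1, hr2, hr3⟩
      choose! g hg1 hg2 hg3 using hKey
      have key : ∀ i ∈ u \ p, g i \ p = {i} := by
        intro i hi
        have higi : i ∈ g i \ p :=
          Finset.mem_sdiff.2 ⟨hg2 i hi, (Finset.mem_sdiff.1 hi).2⟩
        have hgic : (g i).card = 2 := ((hPmem _).1 (hg1 i hi)).2
        have hcard1 : (g i \ p).card = 1 := by
          have e2 := Finset.card_sdiff_add_card_inter (g i) p
          rw [hgic, Finset.inter_comm] at e2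
          rw [hg3 i hi] at e2
          omega
        obtain ⟨x, hx⟩ := Finset.card_eq_one.1 hcard1
        rw [hx] at higi ⊢
        rw [Finset.mem_singleton] at higi
        rw [higi]
      have hinj : Set.InjOn g ↑(u \ p) := by
        intro i hi j hj hij
        have k1 := key i (by simpa using hi)
        have k2 := key j (by simpa using hj)
        rw [hij] at k1
        rw [k1] at k2
        simpa using k2
      have hmaps : ∀ i ∈ u \ p, g i ∈ P \ {p, q} := by
        intro i hi
        rw [Finset.mem_sdiff]
        refine ⟨hg1 i hi, ?_⟩
        simp only [Finset.mem_insert, Finset.mem_singleton]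
        push_neg
        constructor
        · intro h
          have h2 := key i hi
          rw [h, Finset.sdiff_self] at h2
          exact Finset.singleton_ne_empty i h2.symm
        · intro h
          have := hg3 i hi
          rw [h, hpq0] at this
          simp at this
      have hcount : (u \ p).card ≤ (P \ {p, q}).card :=
        Finset.card_le_card_of_injOn g hmaps hinj
      have h1 : (u \ p).card = u.card - 2 := by
        rw [Finset.card_sdiff_of_subset (hPsubu p hpP), hpc]
      have h2 : (P \ {p, q}).card = P.card - 2 := by
        rw [Finset.card_sdiff_of_subset]
        · congr 1
          rw [Finset.card_insert_of_notMem (by simpa using hpqne), Finset.card_singleton]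
        · intro x hx
          rcases Finset.mem_insert.1 hx with rfl | hx
          · exact hpP
          · rw [Finset.mem_singleton] at hx
            exact hx ▸ hqP
      have hucard2 : 2 ≤ u.card := le_trans (by rw [hpc]) (Finset.card_le_card (hPsubu p hpP))
      have hP2 : 2 ≤ P.card := by
        have : ({p, q} : Finset (Finset α)) ⊆ P := by
          intro x hx
          rcases Finset.mem_insert.1 hx with rfl | hx
          · exact hpP
          · rw [Finset.mem_singleton] at hx
            exact hx ▸ hqP
        calc 2 = ({p, q} : Finset (Finset α)).card := by
              rw [Finset.card_insert_of_notMem (by simpa using hpqne), Finset.card_singleton]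
          _ ≤ P.card := Finset.card_le_card this
      exact ⟨by omega, fun h => by omega⟩
    · -- pairwise intersecting
      push_neg at hdisj
      have hPne : P.Nonempty := by
        obtain ⟨i, hi⟩ := hune
        obtain ⟨p, hp, _⟩ := hPcover i hi
        exact ⟨p, hp⟩
      rcases intersecting_pairs (fun p hp => ((hPmem p).1 hp).2)
        (fun p hp q hq => Finset.nonempty_iff_ne_empty.1 (hdisj p hp q hq)) hPne with
        ⟨a, ha⟩ | ⟨a, b, c, hab, hac, hbc, hPe⟩
      · -- star case
        have hau : a ∈ u := by
          obtain ⟨p0, hp0⟩ := hPne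
          exact hPsubu p0 hp0 (ha p0 hp0)
        have hPstar : P = (u.erase a).image (fun b => ({a, b} : Finset α)) := by
          apply Finset.Subset.antisymm
          · intro p hp
            obtain ⟨x, y, hxy, hpe⟩ := Finset.card_eq_two.1 ((hPmem p).1 hp).2
            have hap : a ∈ p := ha p hp
            rw [Finset.mem_image]
            rw [hpe] at hap
            rcases Finset.mem_insert.1 hap with rfl | hay
            · refine ⟨y, ?_, by rw [hpe]⟩
              rw [Finset.mem_erase]
              exact ⟨Ne.symm hxy, hPsubu p hp (by rw [hpe]; simp)⟩
            · rw [Finset.mem_singleton] at hay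
              subst hay
              refine ⟨x, ?_, ?_⟩
              · rw [Finset.mem_erase]
                exact ⟨hxy, hPsubu p hp (by rw [hpe]; simp)⟩
              · rw [hpe]
                ext z; simp; tauto
          · intro p hp
            rw [Finset.mem_image] at hp
            obtain ⟨b, hb, rfl⟩ := hp
            rw [Finset.mem_erase] at hb
            obtain ⟨r, hrP, hbr⟩ := hPcover b hb.2
            have har : a ∈ r := ha r hrP
            have : r = {a, b} := pair_eq har hbr (Ne.symm hb.1) ((hPmem r).1 hrP).2
            exact this ▸ hrP
        have hPcard : P.card = u.card - 1 := by
          rw [hPstar]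
          rw [Finset.card_image_of_injOn, Finset.card_erase_of_mem hau]
          intro x hx y hy hxy
          simp only [Finset.coe_erase, Set.mem_diff, Finset.mem_coe,
            Set.mem_singleton_iff] at hx hy
          simp only at hxy
          have : x ∈ ({a, y} : Finset α) := by rw [← hxy]; simp
          rcases Finset.mem_insert.1 this with h | h
          · exact absurd h hx.2
          · exact Finset.mem_singleton.1 h
        have hu1 : 1 ≤ u.card := Finset.card_pos.2 hune
        refine ⟨by omega, fun h => ?_⟩
        left
        exact ⟨a, hau, by rw [hTeq, hPstar]⟩
      · -- triangle case
        have habP : ({a, b} : Finset α) ∈ P := by rw [hPe]; simp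
        have hacP : ({a, c} : Finset α) ∈ P := by rw [hPe]; simp
        have hbcP : ({b, c} : Finset α) ∈ P := by rw [hPe]; simp
        have hau : a ∈ u := hPsubu _ habP (by simp)
        have hbu : b ∈ u := hPsubu _ habP (by simp)
        have hcu : c ∈ u := hPsubu _ hacP (by simp)
        have hue : u = {a, b, c} := by
          apply Finset.Subset.antisymm
          · intro i hi
            obtain ⟨p, hpP, hip⟩ := hPcover i hi
            rw [hPe] at hpP
            simp only [Finset.mem_insert, Finset.mem_singleton] at hpP ⊢
            rcases hpP with rfl | rfl | rfl <;> simp only [Finset.mem_insert,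
              Finset.mem_singleton] at hip <;> tauto
          · intro i hi
            simp only [Finset.mem_insert, Finset.mem_singleton] at hi
            rcases hi with rfl | rfl | rfl <;> assumption
        have hucard : u.card = 3 := by
          rw [hue]
          rw [Finset.card_insert_of_notMem (by simp [hab, hac]),
            Finset.card_insert_of_notMem (by simp [hbc]), Finset.card_singleton]
        have hPcard : P.card = 3 := by
          rw [hPe]
          have h1 : ({a, b} : Finset α) ≠ {a, c} := by
            intro h
            have : b ∈ ({a, c} : Finset α) := by rw [← h]; simp
            simp only [Finset.mem_insert, Finset.mem_singleton] at this
            tauto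
          have h2 : ({a, b} : Finset α) ≠ {b, c} := by
            intro h
            have : a ∈ ({b, c} : Finset α) := by rw [← h]; simp
            simp only [Finset.mem_insert, Finset.mem_singleton] at this
            tauto
          have h3 : ({a, c} : Finset α) ≠ {b, c} := by
            intro h
            have : a ∈ ({b, c} : Finset α) := by rw [← h]; simp
            simp only [Finset.mem_insert, Finset.mem_singleton] at this
            tauto
          rw [Finset.card_insert_of_notMem (by simp [h1, h2]),
            Finset.card_insert_of_notMem (by simp [h3]), Finset.card_singleton]
        exact ⟨by omega, fun h => by omega⟩

lemma sd_tr (x a b : Finset α) : (x ∆ a) ∆ (x ∆ b) = a ∆ b := by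
  ext t; simp [Finset.mem_symmDiff]; tauto

lemma sd_chain (a b c : Finset α) : (a ∆ b) ∆ (b ∆ c) = a ∆ c := by
  ext t; simp [Finset.mem_symmDiff]; tauto

lemma sd_left_inj {x a b : Finset α} (h : x ∆ a = x ∆ b) : a = b := by
  have := congrArg (fun t => x ∆ t) h
  simpa [symmDiff_symmDiff_cancel_left] using this

lemma even_sd_iff (a b : Finset α) :
    Even ((a ∆ b).card) ↔ (Even a.card ↔ Even b.card) := by
  have := card_sd_add a b
  rw [Nat.even_iff, Nat.even_iff, Nat.even_iff]
  omega

lemma sd_two_singletons {i j : α} (h : i ≠ j) : ({i} : Finset α) ∆ {j} = {i, j} := by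
  ext x; simp [Finset.mem_symmDiff]; aesop

/-- Coverage: in an independent fort, every member has, for each direction `i ∈ u`,
a partner at distance 2 whose difference contains `i`. -/
lemma fort_cov {u : Finset α} {S : Finset (Finset α)} (hf : IsFort u S) (hind : Indep S)
    {s : Finset α} (hs : s ∈ S) {i : α} (hi : i ∈ u) :
    ∃ t ∈ S, (s ∆ t).card = 2 ∧ i ∈ s ∆ t := by
  set v := s ∆ {i} with hv
  have hvs : v ∆ s = {i} := by
    rw [hv, symmDiff_comm s, symmDiff_assoc]; simp
  have hsv : s ∆ v = {i} := by
    rw [hv, ← symmDiff_assoc]; simp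
  have hvu : v ⊆ u := by
    refine Finset.Subset.trans (sd_subset_union _ _) ?_
    rw [Finset.union_subset_iff]
    exact ⟨hf.1 s hs, by simpa using hi⟩
  have hvS : v ∉ S := by
    intro hvS
    apply hind s hs v hvS
    rw [hsv]; rfl
  obtain ⟨w', hw'S, hw'ne, hw'c⟩ := hf.2 v hvu hvS s hs (by rw [hvs]; rfl)
  obtain ⟨j, hj⟩ := Finset.card_eq_one.1 hw'c
  have hw'e : w' = s ∆ ({i} ∆ {j}) := by
    rw [← symmDiff_assoc, ← hv, ← hj, symmDiff_symmDiff_cancel_left]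
  have hij : i ≠ j := by
    intro h
    apply hw'ne
    rw [hw'e, ← h]
    simp
  have hsd : s ∆ w' = {i, j} := by
    rw [hw'e, symmDiff_symmDiff_cancel_left, sd_two_singletons hij]
  refine ⟨w', hw'S, ?_, ?_⟩
  · rw [hsd]
    rw [Finset.card_insert_of_notMem (by simp [hij]), Finset.card_singleton]
  · rw [hsd]; simp

/-- The step relation for distance-2 connectivity inside `S`. -/
def stepRel (S : Finset (Finset α)) (a b : Finset α) : Prop :=
  b ∈ S ∧ (a ∆ b).card = 2

/-- Main lemma for independent forts: cardinality bound and classification. -/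
lemma indep_main {u : Finset α} {S : Finset (Finset α)} (hf : IsFort u S)
    (hind : Indep S) (hne : S.Nonempty) :
    u.card ≤ S.card ∧
    (S.card = u.card →
      (∃ s0 a, a ∈ u ∧ S = insert s0 ((u.erase a).image (fun b => s0 ∆ ({a, b} : Finset α)))) ∨
      (u.card = 4 ∧ ∃ s0 p q : Finset α, p.card = 2 ∧ q.card = 2 ∧ p ∩ q = ∅ ∧ p ∪ q = u ∧
        S = {s0, s0 ∆ p, s0 ∆ q, s0 ∆ u})) := by
  classical
  obtain ⟨s0, hs0⟩ := hne
  set C := S.filter (fun t => Relation.ReflTransGen (stepRel S) s0 t) with hC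
  have hCmem : ∀ t, t ∈ C ↔ t ∈ S ∧ Relation.ReflTransGen (stepRel S) s0 t :=
    fun t => by simp [hC]
  have hCsub : C ⊆ S := Finset.filter_subset _ _
  have hs0C : s0 ∈ C := (hCmem s0).2 ⟨hs0, Relation.ReflTransGen.refl⟩
  have hCstep : ∀ s ∈ C, ∀ t ∈ S, (s ∆ t).card = 2 → t ∈ C := by
    intro s hsC t htS hst
    rw [hCmem] at hsC ⊢
    exact ⟨htS, hsC.2.tail ⟨htS, hst⟩⟩
  set T := C.image (fun t => s0 ∆ t) with hT
  have hTcard : T.card = C.card := by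
    apply Finset.card_image_of_injOn
    intro a _ b _ hab
    exact sd_left_inj hab
  have h0T : (∅ : Finset α) ∈ T := by
    rw [hT, Finset.mem_image]
    exact ⟨s0, hs0C, by simp⟩
  have hsubT : ∀ t ∈ T, t ⊆ u := by
    intro t ht
    rw [hT, Finset.mem_image] at ht
    obtain ⟨c, hcC, rfl⟩ := ht
    refine Finset.Subset.trans (sd_subset_union _ _) ?_
    rw [Finset.union_subset_iff]
    exact ⟨hf.1 s0 hs0, hf.1 c (hCsub hcC)⟩
  have hevenT : ∀ t ∈ T, Even t.card := by
    intro t ht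
    rw [hT, Finset.mem_image] at ht
    obtain ⟨c, hcC, rfl⟩ := ht
    have hreach := ((hCmem c).1 hcC).2
    clear hcC
    induction hreach with
    | refl => simp
    | @tail b c' hab hbc ih =>
      have h1 : (s0 ∆ b) ∆ (b ∆ c') = s0 ∆ c' := sd_chain s0 b c'
      have h2 : Even ((s0 ∆ b) ∆ (b ∆ c')).card := by
        rw [even_sd_iff]
        constructor
        · intro _; rw [hbc.2]; exact even_two
        · intro _; exact ih
      rwa [h1] at h2
  have hstarT : ∀ s ∈ T, ∀ i ∈ u, ∃ t ∈ T, (s ∆ t).card = 2 ∧ i ∈ s ∆ t := by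
    intro s hsT i hi
    rw [hT, Finset.mem_image] at hsT
    obtain ⟨c, hcC, rfl⟩ := hsT
    obtain ⟨t, htS, htc, hit⟩ := fort_cov hf hind (hCsub hcC) hi
    have htC : t ∈ C := hCstep c hcC t htS htc
    refine ⟨s0 ∆ t, Finset.mem_image_of_mem _ htC, ?_, ?_⟩
    · rw [sd_tr]; exact htc
    · rw [sd_tr]; exact hit
  obtain ⟨hbound, hclass⟩ := star_bound u T hsubT h0T hevenT hstarT
  have hCS : C.card ≤ S.card := Finset.card_le_card hCsub
  refine ⟨by omega, fun hSu => ?_⟩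
  have hCeq : C = S := Finset.eq_of_subset_of_card_le hCsub (by omega)
  have hTS : T = S.image (fun t => s0 ∆ t) := by rw [hT, hCeq]
  have hST : S = T.image (fun t => s0 ∆ t) := by
    rw [hTS, Finset.image_image]
    have : ((fun t => s0 ∆ t) ∘ fun t => s0 ∆ t) = id := by
      funext x
      simp [Function.comp, symmDiff_symmDiff_cancel_left]
    rw [this, Finset.image_id]
  rcases hclass (by omega) with ⟨a, hau, hTe⟩ | ⟨hu4, p, q, hpc, hqc, hint, hun, hTe⟩
  · left
    refine ⟨s0, a, hau, ?_⟩
    rw [hST, hTe, Finset.image_insert, Finset.image_image]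
    congr 1
    · simp
  · right
    refine ⟨hu4, s0, p, q, hpc, hqc, hint, hun, ?_⟩
    rw [hST, hTe]
    simp only [Finset.image_insert, Finset.image_singleton]
    congr 1
    simp

theorem fort_bound (u : Finset α) : ∀ S : Finset (Finset α), IsFort u S → S.Nonempty →
    u.card ≤ S.card ∧ (S.card = u.card → Indep S) := by
  induction u using Finset.strongInduction with
  | _ u ih =>
  intro S hf hne
  by_cases hind : Indep S
  · exact ⟨(indep_main hf hind hne).1, fun _ => hind⟩
  rw [Indep] at hind; push_neg at hind
  obtain ⟨s', hs'S, t', ht'S, hst1⟩ := hind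
  obtain ⟨i, hi⟩ := Finset.card_eq_one.1 hst1
  have main : ∀ s t : Finset α, s ∈ S → t ∈ S → s ∆ t = {i} → i ∈ s →
      u.card ≤ S.card ∧ (S.card = u.card → Indep S) := by
    intro s t hsS htS hsd his
    have hiu : i ∈ u := hf.1 s hsS his
    have htse : t = s.erase i := by
      rw [sd_eq_single hsd, sd_single_mem his]
    have hpf := proj_fort hf hiu
    have hFne := projF_nonempty (i := i) ⟨s, hsS⟩
    have hcard := projF_card (i := i) (S := S)
    obtain ⟨ihb, ihe⟩ := ih (u.erase i) (Finset.erase_ssubset hiu) (projF i S) hpf hFne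
    have hit : i ∉ t := by rw [htse]; exact Finset.notMem_erase i s
    have htA : t ∈ projA i S := mem_projA.2 ⟨htS, hit⟩
    have htB : t ∈ projB i S := mem_projB.2 ⟨hit, by rw [htse, Finset.insert_erase his]; exact hsS⟩
    have hABpos : 1 ≤ (projA i S ∩ projB i S).card :=
      Finset.card_pos.2 ⟨t, Finset.mem_inter.2 ⟨htA, htB⟩⟩
    have huerase : (u.erase i).card = u.card - 1 := Finset.card_erase_of_mem hiu
    have hu1 : 1 ≤ u.card := Finset.card_pos.2 ⟨i, hiu⟩
    refine ⟨by omega, fun hSu => ?_⟩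
    exfalso
    have hFcard : (projF i S).card = u.card - 1 := by omega
    have hABone : (projA i S ∩ projB i S).card = 1 := by omega
    have hindF : Indep (projF i S) := ihe (by omega)
    -- every bottom vertex has its top mate in S
    have hAB : ∀ v ∈ projA i S, v ∈ projB i S := by
      intro v hvA
      rw [mem_projA] at hvA
      rw [mem_projB]
      refine ⟨hvA.2, ?_⟩
      by_contra hvB
      have hw : insert i v ⊆ u := Finset.insert_subset hiu (hf.1 v hvA.1)
      have hsd1 : (insert i v) ∆ v = {i} := by
        rw [← sd_insert hvA.2, symmDiff_comm v, symmDiff_assoc]; simp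
      obtain ⟨w', hw'S, hw'ne, hw'c⟩ := hf.2 (insert i v) hw hvB v hvA.1
        (by rw [hsd1]; rfl)
      obtain ⟨j, hj⟩ := Finset.card_eq_one.1 hw'c
      by_cases hij : j = i
      · apply hw'ne
        rw [sd_eq_single hj, hij, sd_single_mem (Finset.mem_insert_self i v),
          Finset.erase_insert hvA.2]
      · have hiw' : i ∈ w' := by
          apply sd_not_mem (a := insert i v) _ (Finset.mem_insert_self i v)
          rw [hj]; simp [Ne.symm hij]
        have hw'' : w'.erase i ∈ projB i S := mem_projB.2
          ⟨Finset.notMem_erase i _, by rwa [Finset.insert_erase hiw']⟩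
        have hvw'' : (v ∆ (w'.erase i)).card = 1 := by
          have hvv : v = (insert i v).erase i := (Finset.erase_insert hvA.2).symm
          rw [hvv, sd_erase_both, hj,
            Finset.erase_eq_of_notMem (by simp only [Finset.mem_singleton]; exact fun h => hij h.symm)]
          simp
        exact hindF v (Finset.mem_union_left _ (mem_projA.2 hvA))
          (w'.erase i) (Finset.mem_union_right _ hw'') hvw''
    -- every top vertex has its bottom mate in S
    have hBA : ∀ v ∈ projB i S, v ∈ projA i S := by
      intro v hvB
      rw [mem_projB] at hvB
      obtain ⟨hiv, hwbar⟩ := hvB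
      rw [mem_projA]
      refine ⟨?_, hiv⟩
      by_contra hvS
      have hvu : v ⊆ u := (Finset.subset_insert i v).trans (hf.1 _ hwbar)
      have hsd1 : v ∆ (insert i v) = {i} := by
        rw [← sd_insert hiv, symmDiff_symmDiff_cancel_left]
      obtain ⟨w', hw'S, hw'ne, hw'c⟩ := hf.2 v hvu hvS (insert i v) hwbar
        (by rw [hsd1]; rfl)
      obtain ⟨j, hj⟩ := Finset.card_eq_one.1 hw'c
      by_cases hij : j = i
      · apply hw'ne
        rw [sd_eq_single hj, hij, sd_insert hiv]
      · have hiw' : i ∉ w' := by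
          apply sd_not_mem' (a := v) _ hiv
          rw [hj]; simp [Ne.symm hij]
        apply hindF v (Finset.mem_union_right _ (mem_projB.2 ⟨hiv, hwbar⟩))
          w' (Finset.mem_union_left _ (mem_projA.2 ⟨hw'S, hiw'⟩))
        exact hw'c
    have hAeq : projA i S = projA i S ∩ projB i S :=
      Finset.Subset.antisymm (fun v hv => Finset.mem_inter.2 ⟨hv, hAB v hv⟩)
        Finset.inter_subset_left
    have hFeq : projF i S = projA i S ∩ projB i S := by
      apply Finset.Subset.antisymm
      · apply Finset.union_subset
        · intro v hv; exact Finset.mem_inter.2 ⟨hv, hAB v hv⟩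
        · intro v hv; exact Finset.mem_inter.2 ⟨hBA v hv, hv⟩
      · exact Finset.inter_subset_left.trans Finset.subset_union_left
    have hu2 : u.card = 2 := by
      rw [hFeq] at hFcard
      omega
    have hA1 : (projA i S).card = 1 := by rw [hAeq]; exact hABone
    obtain ⟨v, hv⟩ := Finset.card_eq_one.1 hA1
    have hvA : v ∈ projA i S := by rw [hv]; simp
    have hvB : v ∈ projB i S := hAB v hvA
    rw [mem_projA] at hvA
    rw [mem_projB] at hvB
    -- S = {v, insert i v}
    have hpairS : ({v, insert i v} : Finset (Finset α)) ⊆ S := by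
      intro x hx
      rcases Finset.mem_insert.1 hx with rfl | hx
      · exact hvA.1
      · rw [Finset.mem_singleton] at hx
        exact hx ▸ hvB.2
    have hvne : v ≠ insert i v := by
      intro h
      exact hvA.2 (h ▸ Finset.mem_insert_self i v)
    have hpaircard : ({v, insert i v} : Finset (Finset α)).card = 2 := by
      rw [Finset.card_insert_of_notMem (by simpa using hvne), Finset.card_singleton]
    have hSeq : S = {v, insert i v} := by
      symm
      apply Finset.eq_of_subset_of_card_le hpairS
      omega
    obtain ⟨j, hju'⟩ : ∃ j, j ∈ u.erase i := by
      apply Finset.Nonempty.exists_mem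
      rw [← Finset.card_pos, huerase]
      omega
    rw [Finset.mem_erase] at hju'
    apply fort_span hf hju'.2 _ ⟨s, hsS⟩
    intro x hx y hy
    rw [hSeq] at hx hy
    have hmv : ∀ z, z ∈ ({v, insert i v} : Finset (Finset α)) → (j ∈ z ↔ j ∈ v) := by
      intro z hz
      rcases Finset.mem_insert.1 hz with rfl | hz
      · rfl
      · rw [Finset.mem_singleton] at hz
        subst hz
        simp [Finset.mem_insert, hju'.1]
    rw [hmv x hx, hmv y hy]
  have himem : i ∈ s' ∪ t' := by
    apply sd_subset_union
    rw [hi]; simp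
  rcases Finset.mem_union.1 himem with his | hit
  · exact main s' t' hs'S ht'S hi his
  · exact main t' s' ht'S hs'S (by rwa [symmDiff_comm]) hit

lemma zbStep_subset {V : Type*} (G : SimpleGraph V) (W : Set V) : zbStep G W ⊆ W :=
  fun _ hw => hw.1

lemma zb_exists_fixed {V : Type*} [Fintype V] (G : SimpleGraph V) (W : Set V)
    (hW : IsZeroBlocking G W) :
    ∃ Z : Set V, Z ⊆ W ∧ Z.Nonempty ∧ zbStep G Z = Z := by
  classical
  set f := zbStep G with hf
  have hsub : ∀ k, f^[k] W ⊆ W := by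
    intro k
    induction k with
    | zero => simp
    | succ k ihk =>
      rw [Function.iterate_succ_apply']
      exact (zbStep_subset G _).trans ihk
  have hfix : ∃ k, f (f^[k] W) = f^[k] W := by
    by_contra hcon
    push_neg at hcon
    have key : ∀ k, (f^[k] W).ncard + k ≤ W.ncard := by
      intro k
      induction k with
      | zero => simp
      | succ k ihk =>
        have hlt : (f^[k+1] W).ncard < (f^[k] W).ncard := by
          apply Set.ncard_lt_ncard _ (Set.toFinite _)
          rw [Function.iterate_succ_apply']
          exact HasSubset.Subset.ssubset_of_ne (zbStep_subset G _) (hcon k)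
        omega
    have h1 := key (W.ncard + 1)
    have h2 : (f^[W.ncard + 1] W).ncard ≥ 0 := Nat.zero_le _
    omega
  obtain ⟨k, hk⟩ := hfix
  exact ⟨f^[k] W, hsub k, hW k, by rw [← Function.iterate_succ_apply' f k W] at hk ⊢; exact hk⟩

lemma cube_adj {n : ℕ} (a b : Finset (Fin n)) :
    (cubeGraph n).Adj a b ↔ (a ∆ b).card = 1 := Iff.rfl

lemma fixed_fort {n : ℕ} {Z : Set (Finset (Fin n))} (hfix : zbStep (cubeGraph n) Z = Z) :
    IsFort (Finset.univ : Finset (Fin n)) (Set.toFinite Z).toFinset := by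
  constructor
  · intro s _
    exact Finset.subset_univ s
  · intro v _ hvZ w hwZ hvw
    rw [Set.Finite.mem_toFinset] at hvZ hwZ
    have hw2 : w ∈ zbStep (cubeGraph n) Z := by rw [hfix]; exact hwZ
    have hneg := hw2.2
    push_neg at hneg
    obtain ⟨w', hw'Z, hadj, hne⟩ := hneg v hvZ (by rwa [cube_adj])
    exact ⟨w', Set.Finite.mem_toFinset _ |>.2 hw'Z, hne, by rwa [cube_adj] at hadj⟩
lemma mem_nbhd {n : ℕ} (x w : Finset (Fin n)) :
    w ∈ (cubeGraph n).neighborSet x ↔ ∃ i, w = x ∆ {i} := by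
  rw [SimpleGraph.mem_neighborSet, cube_adj]
  constructor
  · intro h
    obtain ⟨i, hi⟩ := Finset.card_eq_one.1 h
    exact ⟨i, sd_eq_single hi⟩
  · rintro ⟨i, rfl⟩
    rw [sd_cancel]
    simp

lemma nbhd_encard {n : ℕ} (x : Finset (Fin n)) :
    ((cubeGraph n).neighborSet x).encard = (n : ℕ∞) := by
  have he : (cubeGraph n).neighborSet x =
      ↑(Finset.univ.image (fun i : Fin n => x ∆ {i})) := by
    ext w
    rw [mem_nbhd]
    simp only [Finset.coe_image, Set.mem_image, Finset.mem_coe, Finset.coe_univ,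
      Set.image_univ, Set.mem_range]
    constructor
    · rintro ⟨i, rfl⟩; exact ⟨i, rfl⟩
    · rintro ⟨i, rfl⟩; exact ⟨i, rfl⟩
  rw [he, Set.encard_coe_eq_coe_finsetCard]
  have : (Finset.univ.image (fun i : Fin n => x ∆ {i})).card = n := by
    rw [Finset.card_image_of_injective _ ?_, Finset.card_univ, Fintype.card_fin]
    intro i j hij
    have := sd_left_inj hij
    simpa using this
  rw [this]

lemma mem_nbhd_sd {n : ℕ} {y z : Finset (Fin n)} (hyz : (y ∆ z).card = 2)
    (w : Finset (Fin n)) :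
    w ∈ symmDiff ((cubeGraph n).neighborSet y) ((cubeGraph n).neighborSet z) ↔
      ((∃ i, i ∉ y ∆ z ∧ w = y ∆ {i}) ∨ (∃ i, i ∉ y ∆ z ∧ w = z ∆ {i})) := by
  have key : ∀ y' z' : Finset (Fin n), (y' ∆ z').card = 2 →
      ∀ w, w ∈ (cubeGraph n).neighborSet y' → w ∉ (cubeGraph n).neighborSet z' →
      ∃ i, i ∉ y' ∆ z' ∧ w = y' ∆ {i} := by
    intro y' z' hc w h1 h2
    obtain ⟨i, rfl⟩ := (mem_nbhd y' w).1 h1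
    refine ⟨i, ?_, rfl⟩
    intro hi
    apply h2
    rw [SimpleGraph.mem_neighborSet, cube_adj]
    have he : z' ∆ (y' ∆ {i}) = (y' ∆ z').erase i := by
      rw [← sd_single_mem hi]
      rw [← symmDiff_assoc, symmDiff_comm z' y']
    rw [he, Finset.card_erase_of_mem hi, hc]
  have key2 : ∀ y' z' : Finset (Fin n), (y' ∆ z').card = 2 → ∀ i, i ∉ y' ∆ z' →
      y' ∆ {i} ∈ (cubeGraph n).neighborSet y' ∧ y' ∆ {i} ∉ (cubeGraph n).neighborSet z' := by
    intro y' z' hc i hi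
    constructor
    · rw [mem_nbhd]; exact ⟨i, rfl⟩
    · rw [SimpleGraph.mem_neighborSet, cube_adj]
      have he : z' ∆ (y' ∆ {i}) = insert i (y' ∆ z') := by
        rw [← sd_insert hi, ← symmDiff_assoc, symmDiff_comm z' y']
      rw [he, Finset.card_insert_of_notMem hi, hc]
      omega
  rw [Set.mem_symmDiff]
  constructor
  · rintro (⟨h1, h2⟩ | ⟨h1, h2⟩)
    · exact Or.inl (key y z hyz w h1 h2)
    · refine Or.inr ?_
      obtain ⟨i, hi, he⟩ := key z y (by rwa [symmDiff_comm]) w h1 h2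
      exact ⟨i, by rwa [symmDiff_comm y z], he⟩
  · rintro (⟨i, hi, rfl⟩ | ⟨i, hi, rfl⟩)
    · exact Or.inl (key2 y z hyz i hi)
    · refine Or.inr ?_
      have := key2 z y (by rwa [symmDiff_comm z y]) i (by rw [symmDiff_comm z y]; exact hi)
      exact this

lemma nbhd_sd_encard {n : ℕ} (hn : n = 4) {y z : Finset (Fin n)} (hyz : (y ∆ z).card = 2) :
    (symmDiff ((cubeGraph n).neighborSet y) ((cubeGraph n).neighborSet z)).encard =
      (n : ℕ∞) := by
  classical
  set K := (Finset.univ : Finset (Fin n)) \ (y ∆ z) with hK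
  have heq : symmDiff ((cubeGraph n).neighborSet y) ((cubeGraph n).neighborSet z) =
      ↑((K.image (fun i => y ∆ {i})) ∪ (K.image (fun i => z ∆ {i}))) := by
    ext w
    rw [mem_nbhd_sd hyz]
    simp only [Finset.coe_union, Set.mem_union, Finset.coe_image, Set.mem_image,
      Finset.mem_coe, hK, Finset.mem_sdiff, Finset.mem_univ, true_and]
    constructor
    · rintro (⟨i, hi, rfl⟩ | ⟨i, hi, rfl⟩)
      · exact Or.inl ⟨i, hi, rfl⟩
      · exact Or.inr ⟨i, hi, rfl⟩
    · rintro (⟨i, hi, rfl⟩ | ⟨i, hi, rfl⟩)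
      · exact Or.inl ⟨i, hi, rfl⟩
      · exact Or.inr ⟨i, hi, rfl⟩
  rw [heq, Set.encard_coe_eq_coe_finsetCard]
  have hyzne : y ≠ z := by
    intro h; rw [h, symmDiff_self] at hyz; simp at hyz
  have hdisj : Disjoint (K.image (fun i => y ∆ {i})) (K.image (fun i => z ∆ {i})) := by
    rw [Finset.disjoint_left]
    rintro a ha hb
    obtain ⟨i, hi, rfl⟩ := Finset.mem_image.1 ha
    obtain ⟨j, hj, hji⟩ := Finset.mem_image.1 hb
    rw [hK, Finset.mem_sdiff] at hi hj
    -- y ∆ {i} = z ∆ {j} → y ∆ z = {i} ∆ {j}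
    have hyzij : y ∆ z = {j} ∆ {i} := by
      have h2 : z ∆ (z ∆ {j}) = {j} := sd_cancel z {j}
      have h3 : z ∆ (y ∆ {i}) = {j} := by rw [← hji]; exact h2
      have h4 : (z ∆ y) ∆ (y ∆ (y ∆ {i})) = z ∆ (y ∆ {i}) := sd_chain z y (y ∆ {i})
      rw [sd_cancel] at h4
      rw [← h4] at h3
      -- h3 : (z ∆ y) ∆ {i} = {j}
      have h5 : z ∆ y = {j} ∆ {i} := by
        have := congrArg (fun t => t ∆ {i}) h3
        simpa [symmDiff_assoc, symmDiff_self] using this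
      rwa [symmDiff_comm z y] at h5
    by_cases hij : i = j
    · subst hij
      rw [symmDiff_self] at hyzij
      exact hyzne (by rwa [symmDiff_eq_bot] at hyzij)
    · have : i ∈ y ∆ z := by
        rw [hyzij, Finset.mem_symmDiff]
        simp [hij, Ne.symm hij]
      exact hi.2 this
  rw [Finset.card_union_of_disjoint hdisj]
  have hinj : ∀ x : Finset (Fin n), Set.InjOn (fun i => x ∆ {i}) ↑K := by
    intro x i _ j _ hij
    simp only at hij
    have := sd_left_inj hij
    simpa using this
  rw [Finset.card_image_of_injOn (hinj y), Finset.card_image_of_injOn (hinj z)]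
  have hKcard : K.card = 2 := by
    rw [hK, Finset.card_sdiff_of_subset (Finset.subset_univ _), Finset.card_univ, Fintype.card_fin,
      hyz, hn]
  rw [hKcard, hn]

lemma sd_right_comm (x a b : Finset α) : (x ∆ a) ∆ b = (x ∆ b) ∆ a := by
  rw [symmDiff_assoc, symmDiff_comm a b, ← symmDiff_assoc]

lemma sd_id1 (s0 : Finset α) (a : α) : (s0 ∆ {a}) ∆ {a} = s0 := by
  rw [symmDiff_assoc, symmDiff_self, symmDiff_bot]

end ZBAux

open scoped symmDiff

theorem minZeroBlocking_cube (n : ℕ) (hn : 2 ≤ n) (W : Set (Finset (Fin n)))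
    (hW : IsZeroBlocking (cubeGraph n) W) :
    W.encard = (n : ℕ∞) ↔
      (∃ x : Finset (Fin n), W = (cubeGraph n).neighborSet x) ∨
      (n = 4 ∧ ∃ y z : Finset (Fin n), (symmDiff y z).card = 2 ∧
        W = symmDiff ((cubeGraph n).neighborSet y) ((cubeGraph n).neighborSet z)) := by
  classical
  constructor
  · intro henc
    have hfinW : W.Finite := Set.toFinite W
    set Wf := hfinW.toFinset with hWfdef
    have hWcoe : ↑Wf = W := hfinW.coe_toFinset
    have hWcard : Wf.card = n := by
      have h1 : W.encard = Wf.card := hfinW.encard_eq_coe_toFinset_card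
      rw [henc] at h1
      exact_mod_cast h1.symm
    obtain ⟨Z, hZW, hZne, hZfix⟩ := ZBAux.zb_exists_fixed (cubeGraph n) W hW
    have hZfort := ZBAux.fixed_fort hZfix
    have hZfne : (Set.toFinite Z).toFinset.Nonempty := by
      rw [Set.Finite.toFinset_nonempty]
      exact hZne
    have hZsub : (Set.toFinite Z).toFinset ⊆ Wf := by
      intro x hx
      rw [Set.Finite.mem_toFinset] at hx ⊢
      exact hZW hx
    have hucard : (Finset.univ : Finset (Fin n)).card = n := by
      rw [Finset.card_univ, Fintype.card_fin]
    obtain ⟨hb1, hb2⟩ := ZBAux.fort_bound Finset.univ (Set.toFinite Z).toFinset hZfort hZfne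
    have hZWcard : (Set.toFinite Z).toFinset.card ≤ Wf.card := Finset.card_le_card hZsub
    have hZeq : (Set.toFinite Z).toFinset = Wf :=
      Finset.eq_of_subset_of_card_le hZsub (by omega)
    rw [hZeq] at hZfort hb1 hb2 hZfne
    have hWind : ZBAux.Indep Wf := hb2 (by omega)
    obtain ⟨_, hclass⟩ := ZBAux.indep_main hZfort hWind hZfne
    rcases hclass (by omega) with ⟨s0, a, hau, hSe⟩ |
      ⟨hu4, s0, p, q, hpc, hqc, hipq, hupq, hSe⟩
    · -- neighborhood case
      left
      refine ⟨s0 ∆ {a}, ?_⟩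
      rw [← hWcoe, hSe]
      ext w
      simp only [Finset.coe_insert, Set.mem_insert_iff, Finset.coe_image, Set.mem_image,
        Finset.mem_coe]
      rw [ZBAux.mem_nbhd]
      constructor
      · rintro (rfl | ⟨b, hb, rfl⟩)
        · exact ⟨a, (ZBAux.sd_id1 w a).symm⟩
        · rw [Finset.mem_erase] at hb
          refine ⟨b, ?_⟩
          rw [symmDiff_assoc, ZBAux.sd_two_singletons (Ne.symm hb.1)]
      · rintro ⟨i, rfl⟩
        by_cases hia : i = a
        · subst hia
          exact Or.inl (ZBAux.sd_id1 s0 i)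
        · right
          refine ⟨i, Finset.mem_erase.2 ⟨hia, Finset.mem_univ i⟩, ?_⟩
          rw [symmDiff_assoc, ZBAux.sd_two_singletons (fun h => hia h.symm)]
    · -- exceptional case
      right
      have hn4 : n = 4 := by rw [← hucard]; exact hu4
      refine ⟨hn4, ?_⟩
      obtain ⟨c, d, hcd, hqe⟩ := Finset.card_eq_two.1 hqc
      have hmemq : ∀ i : Fin n, i ∉ p ↔ i ∈ q := by
        intro i
        constructor
        · intro hip
          have : i ∈ p ∪ q := by rw [hupq]; exact Finset.mem_univ i
          rcases Finset.mem_union.1 this with h | h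
          · exact absurd h hip
          · exact h
        · intro hiq hip
          have : i ∈ p ∩ q := Finset.mem_inter.2 ⟨hip, hiq⟩
          rw [hipq] at this
          simp at this
      set y := s0 ∆ {c} with hy
      set z := y ∆ p with hz
      have hyz : y ∆ z = p := ZBAux.sd_cancel y p
      have hyzc : (y ∆ z).card = 2 := by rw [hyz]; exact hpc
      have hcq : c ∈ q := by rw [hqe]; simp
      have hdq : d ∈ q := by rw [hqe]; simp
      have e1 : y ∆ {c} = s0 := ZBAux.sd_id1 s0 c
      have e2 : y ∆ {d} = s0 ∆ q := by
        rw [hy, symmDiff_assoc, ZBAux.sd_two_singletons hcd, ← hqe]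
      have e3 : z ∆ {c} = s0 ∆ p := by
        rw [hz, ZBAux.sd_right_comm, e1]
      have e4 : z ∆ {d} = s0 ∆ Finset.univ := by
        rw [hz, ZBAux.sd_right_comm, e2, symmDiff_assoc]
        congr 1
        ext x
        simp only [Finset.mem_symmDiff, Finset.mem_univ, iff_true]
        have := hmemq x
        tauto
      refine ⟨y, z, hyzc, ?_⟩
      rw [← hWcoe, hSe]
      ext w
      rw [ZBAux.mem_nbhd_sd hyzc]
      simp only [Finset.coe_insert, Set.mem_insert_iff, Finset.coe_singleton,
        Set.mem_singleton_iff]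
      constructor
      · rintro (rfl | rfl | rfl | rfl)
        · exact Or.inl ⟨c, by rw [hyz]; exact (hmemq c).2 hcq, e1.symm⟩
        · exact Or.inr ⟨c, by rw [hyz]; exact (hmemq c).2 hcq, e3.symm⟩
        · exact Or.inl ⟨d, by rw [hyz]; exact (hmemq d).2 hdq, e2.symm⟩
        · exact Or.inr ⟨d, by rw [hyz]; exact (hmemq d).2 hdq, e4.symm⟩
      · rintro (⟨i, hi, rfl⟩ | ⟨i, hi, rfl⟩)
        · rw [hyz] at hi
          have hiq : i ∈ q := (hmemq i).1 hi
          rw [hqe, Finset.mem_insert, Finset.mem_singleton] at hiq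
          rcases hiq with rfl | rfl
          · exact Or.inl e1
          · exact Or.inr (Or.inr (Or.inl e2))
        · rw [hyz] at hi
          have hiq : i ∈ q := (hmemq i).1 hi
          rw [hqe, Finset.mem_insert, Finset.mem_singleton] at hiq
          rcases hiq with rfl | rfl
          · exact Or.inr (Or.inl e3)
          · exact Or.inr (Or.inr (Or.inr e4))
  · intro h
    rcases h with ⟨x, rfl⟩ | ⟨hn4, y, z, hyz, rfl⟩
    · exact ZBAux.nbhd_encard x
    · exact ZBAux.nbhd_sd_encard hn4 hyz
end
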